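/- arXiv:1608.02687 — 11 statements merged into one kernel-verified Lean document; each statement's English description precedes it below -/
import Mathlib

section
/- Let q be a prime power and n a positive integer with gcd(n,q)=1. Let ω ∈ F_q* be an element of multiplicative order r, let m be the smallest positive integer such that nr divides q^m − 1, let δ ∈ F_{q^m}* be an element of order nr with δ^n = ω, and set ξ = δ^r. Let C = ⟨g(x)⟩ ⊆ F_q[x]/(x^n − ω) be an ω-constacyclic code of length n. Let l be an integer with gcd(l,n)=1, let d be an integer with 1 ≤ d ≤ n−1, and let b be an arbitrary integer. If every element of {δ·ξ^{l·i} : b ≤ i ≤ b+d−1} is a root of g(x), then the minimum Hamming distance of C is at least d+1. -/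
open Polynomial

/-- The pair-distance between two vectors indexed by `ZMod n`,
with indices taken modulo `n`. -/
def pairDist {n : ℕ} [NeZero n] {α : Type*} [DecidableEq α] (u v : ZMod n → α) : ℕ :=
  (Finset.univ.filter fun i : ZMod n => (u i, u (i + 1)) ≠ (v i, v (i + 1))).card

/-- A finite subset of `ZMod n` consisting of (at least one) cyclically consecutive elements. -/
def IsArc {n : ℕ} (T : Finset (ZMod n)) : Prop :=
  ∃ (a : ZMod n) (k : ℕ), 0 < k ∧ T = (Finset.range k).image fun j : ℕ => a + (j : ZMod n)

/-- `L(S)`: the minimal number of parts in a partition of `S` into nonempty sets of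
cyclically consecutive elements of `ZMod n`. -/
noncomputable def cycL {n : ℕ} (S : Finset (ZMod n)) : ℕ :=
  sInf {m | ∃ P : Finset (Finset (ZMod n)), P.card = m ∧ (∀ T ∈ P, IsArc T) ∧
    (↑P : Set (Finset (ZMod n))).PairwiseDisjoint id ∧ P.sup id = S}

/-- The polynomial `∑ i, c i * x^i` associated to a vector `c` of length `n`. -/
noncomputable def polyOf {n : ℕ} [NeZero n] {F : Type*} [Semiring F] (c : ZMod n → F) :
    Polynomial F :=
  ∑ i : ZMod n, Polynomial.C (c i) * Polynomial.X ^ i.val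

/-- `d` is the minimum pair-distance of the code `Code`. -/
def IsMinPairDist {n : ℕ} [NeZero n] {α : Type*} [DecidableEq α]
    (Code : Set (ZMod n → α)) (d : ℕ) : Prop :=
  (∀ u ∈ Code, ∀ v ∈ Code, u ≠ v → d ≤ pairDist u v) ∧
    ∃ u ∈ Code, ∃ v ∈ Code, u ≠ v ∧ pairDist u v = d

/-- The coefficient `a₀(i) = ∑_{j=0}^{⌊(i−2)/2⌋} C(i−2−j, j) b^{i−2−2j} c^{j+1}`. -/
noncomputable def aCoeff0 {F : Type*} [Field F] (b c : F) (i : ℕ) : F :=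
  ∑ j ∈ Finset.range ((i - 2) / 2 + 1),
    ((i - 2 - j).choose j : F) * b ^ (i - 2 - 2 * j) * c ^ (j + 1)

/-- The coefficient `a₁(i) = ∑_{j=0}^{⌊(i−1)/2⌋} C(i−1−j, j) b^{i−1−2j} c^{j}`. -/
noncomputable def aCoeff1 {F : Type*} [Field F] (b c : F) (i : ℕ) : F :=
  ∑ j ∈ Finset.range ((i - 1) / 2 + 1),
    ((i - 1 - j).choose j : F) * b ^ (i - 1 - 2 * j) * c ^ j

/-!
Multiplying the `k`-th coordinate of the codeword by `δ^k ξ^(l b k)` turns the `d` root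
conditions into `∑ₖ aₖ (ξ^(l k))^j = 0` for `0 ≤ j < d`. The nodes `ξ^(l k)` are pairwise
distinct because `ξ` has order exactly `n` and `l` is prime to `n`, so a nonzero `a` supported
on at most `d` coordinates would lie in the kernel of an invertible Vandermonde matrix.
-/

open Function

theorem lt_hammingNorm_of_forall_sum_mul_pow_eq_zero {R ι : Type*} [CommRing R] [IsDomain R]
    [DecidableEq R] [Fintype ι] {a x : ι → R} (hx : Injective x) (ha : a ≠ 0) {d : ℕ}
    (hsum : ∀ j < d, ∑ i, a i * x i ^ j = 0) : d < hammingNorm a := by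
  by_contra! hle
  set S := Finset.univ.filter fun i => a i ≠ 0
  have hsumS :
      ∀ j : Fin S.card, ∑ t, a (S.equivFin.symm t) * x (S.equivFin.symm t) ^ (j : ℕ) = 0 := by
    intro j
    calc ∑ t, a (S.equivFin.symm t) * x (S.equivFin.symm t) ^ (j : ℕ)
        = ∑ i : S, a i * x i ^ (j : ℕ) :=
          Equiv.sum_comp S.equivFin.symm fun i : S => a i * x i ^ (j : ℕ)
      _ = ∑ i ∈ S, a i * x i ^ (j : ℕ) := S.sum_coe_sort fun i => a i * x i ^ (j : ℕ)
      _ = ∑ i, a i * x i ^ (j : ℕ) :=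
        Finset.sum_filter_of_ne fun i _ hi => left_ne_zero_of_mul hi
      _ = 0 := hsum j (j.isLt.trans_le hle)
  have hzero := Matrix.eq_zero_of_forall_pow_sum_mul_pow_eq_zero
    (hx.comp (Subtype.val_injective.comp S.equivFin.symm.injective)) hsumS
  obtain ⟨i, hi⟩ := Function.ne_iff.mp ha
  exact hi (by simpa using congrFun hzero (S.equivFin ⟨i, by simpa [S] using hi⟩))

theorem aeval_polyOf_mul_zpow {F E : Type*} [CommSemiring F] [Semifield E] [Algebra F E]
    {n : ℕ} [NeZero n] (c : ZMod n → F) (δ : E) {ξ : E} (hξ0 : ξ ≠ 0) (l b : ℤ) (j : ℕ) :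
    aeval (δ * ξ ^ (l * (b + j))) (polyOf c) =
      ∑ k, algebraMap F E (c k) * (δ ^ k.val * ξ ^ (l * b * k.val)) * (ξ ^ (l * k.val)) ^ j := by
  simp only [polyOf, map_sum, map_mul, aeval_C, map_pow, aeval_X, mul_assoc]
  refine Finset.sum_congr rfl fun k _ => ?_
  rw [mul_pow, ← zpow_natCast (ξ ^ _) k.val, ← zpow_natCast (ξ ^ (l * k.val)) j,
    ← zpow_mul, ← zpow_mul, ← zpow_add₀ hξ0]
  ring_nf

theorem injective_zpow_mul_val {G₀ : Type*} [GroupWithZero G₀] {x : G₀} (hx0 : x ≠ 0) {n : ℕ}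
    [NeZero n] (hx : orderOf x = n) {l : ℤ} (hl : Int.gcd l n = 1) :
    Injective fun k : ZMod n => x ^ (l * k.val) := by
  intro k k' (h : x ^ (l * k.val) = x ^ (l * k'.val))
  rw [← Units.val_mk0 hx0, orderOf_units] at hx
  rw [← Units.val_mk0 hx0, ← Units.val_zpow_eq_zpow_val, ← Units.val_zpow_eq_zpow_val,
    Units.val_inj, zpow_eq_zpow_iff_modEq, hx] at h
  have hmod := h.cancel_left_div_gcd (by simp [NeZero.pos])
  rw [Int.gcd_comm, hl, Nat.cast_one, Int.ediv_one] at hmod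
  simpa using (ZMod.intCast_eq_intCast_iff _ _ _).mpr hmod

theorem orderOf_pow_eq_of_orderOf_eq_mul {M : Type*} [Monoid M] {x : M} {n r : ℕ}
    (hx : orderOf x = n * r) (hnr : n * r ≠ 0) : orderOf (x ^ r) = n := by
  have := orderOf_pow_orderOf_div (hx ▸ hnr) (hx ▸ dvd_mul_right n r)
  rwa [hx, Nat.mul_div_cancel_left r (Nat.pos_of_ne_zero (left_ne_zero_of_mul hnr))] at this

theorem stmt0_general {F E : Type*} [Field F] [DecidableEq F]
    [Field E] [Fintype E] [Algebra F E]
    {n r : ℕ} [NeZero n]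
    {ω : F} (hω0 : ω ≠ 0)
    {δ : E} (hδ : orderOf δ = n * r) (hδn : δ ^ n = algebraMap F E ω)
    {ξ : E} (hξ : ξ = δ ^ r)
    {g : Polynomial F}
    {l : ℤ} (hl : Int.gcd l n = 1) {d : ℕ}
    (b : ℤ)
    (hroots : ∀ i : ℤ, b ≤ i → i ≤ b + d - 1 → Polynomial.aeval (δ * ξ ^ (l * i)) g = 0)
    (c : ZMod n → F) (hc : c ≠ 0) (hcC : g ∣ polyOf c) :
    d + 1 ≤ hammingNorm c := by
  classical
  have hδ0 : δ ≠ 0 := by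
    rintro rfl
    exact hω0 (by simpa [zero_pow (NeZero.ne n)] using hδn.symm)
  have hξ0 : ξ ≠ 0 := hξ ▸ pow_ne_zero r hδ0
  have hξn : orderOf ξ = n := by
    have hδfin : orderOf δ ≠ 0 := by
      rw [← Units.val_mk0 hδ0, orderOf_units]
      exact (orderOf_pos _).ne'
    rw [hξ]
    exact orderOf_pow_eq_of_orderOf_eq_mul hδ (hδ ▸ hδfin)
  set w : ZMod n → E := fun k => δ ^ k.val * ξ ^ (l * b * k.val)
  have hw : ∀ k, w k ≠ 0 := fun k => mul_ne_zero (pow_ne_zero _ hδ0) (zpow_ne_zero _ hξ0)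
  have hnorm : hammingNorm (fun k => algebraMap F E (c k) * w k) = hammingNorm c :=
    hammingNorm_comp (fun k t => algebraMap F E t * w k)
      (fun k => (mul_left_injective₀ (hw k)).comp (algebraMap F E).injective) (fun k => by simp)
  rw [← hnorm]
  refine lt_hammingNorm_of_forall_sum_mul_pow_eq_zero (injective_zpow_mul_val hξ0 hξn hl) ?_
    fun j hj => ?_
  · rwa [← hammingNorm_ne_zero_iff, hnorm, hammingNorm_ne_zero_iff]
  obtain ⟨h, hh⟩ := hcC
  refine (aeval_polyOf_mul_zpow c δ hξ0 l b j).symm.trans ?_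
  rw [hh, map_mul, hroots (b + j) (by omega) (by omega), zero_mul]

/-- BCH-type bound for constacyclic codes.
If every element of `{δ·ξ^{l·i} : b ≤ i ≤ b+d−1}` is a root of the generator polynomial `g`
of the `ω`-constacyclic code `C = ⟨g⟩ ⊆ F_q[x]/(x^n − ω)`, then the minimum Hamming
distance of `C` is at least `d + 1`. -/
theorem stmt0 {F E : Type*} [Field F] [Fintype F] [DecidableEq F]
    [Field E] [Fintype E] [Algebra F E]
    {q n r m : ℕ} [NeZero n] (hq : Fintype.card F = q)
    (hcop : Nat.gcd n q = 1)
    {ω : F} (hω0 : ω ≠ 0) (hr : orderOf ω = r)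
    (hm : 0 < m ∧ n * r ∣ q ^ m - 1 ∧ ∀ m' : ℕ, 0 < m' → n * r ∣ q ^ m' - 1 → m ≤ m')
    (hE : Fintype.card E = q ^ m)
    {δ : E} (hδ : orderOf δ = n * r) (hδn : δ ^ n = algebraMap F E ω)
    {ξ : E} (hξ : ξ = δ ^ r)
    {g : Polynomial F} (hmonic : g.Monic) (hgdvd : g ∣ X ^ n - C ω)
    {l : ℤ} (hl : Int.gcd l n = 1) {d : ℕ} (hd1 : 1 ≤ d) (hdn : d ≤ n - 1)
    (b : ℤ)
    (hroots : ∀ i : ℤ, b ≤ i → i ≤ b + d - 1 → Polynomial.aeval (δ * ξ ^ (l * i)) g = 0)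
    (c : ZMod n → F) (hc : c ≠ 0) (hcC : g ∣ polyOf c) :
    d + 1 ≤ hammingNorm c :=
  stmt0_general hω0 hδ hδn hξ hl b hroots c hc hcC
end

section
/- Let u, v ∈ Σ^n be two vectors over an alphabet Σ with 0 < d_H(u,v) < n, and let S = {0 ≤ i ≤ n−1 : u_i ≠ v_i}. Then d_P(u,v) = d_H(u,v) + L(S). -/
open Polynomial

namespace Stmt1Aux
open Finset

variable {n : ℕ} [NeZero n]

def bdry (S : Finset (ZMod n)) : Finset (ZMod n) :=
  Finset.univ.filter fun i => i ∉ S ∧ i + 1 ∈ S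

lemma exists_add_notMem (S : Finset (ZMod n)) (hx0 : ∃ x : ZMod n, x ∉ S)
    (a : ZMod n) : ∃ k : ℕ, a + (k : ZMod n) ∉ S := by
  obtain ⟨x, hx⟩ := hx0
  refine ⟨(x - a).val, ?_⟩
  simpa [ZMod.natCast_val, ZMod.cast_id] using hx

lemma exists_sub_notMem (S : Finset (ZMod n)) (hx0 : ∃ x : ZMod n, x ∉ S)
    (a : ZMod n) : ∃ k : ℕ, a - 1 - (k : ZMod n) ∉ S := by
  obtain ⟨x, hx⟩ := hx0
  refine ⟨(a - 1 - x).val, ?_⟩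
  simpa [ZMod.natCast_val, ZMod.cast_id] using hx

variable (S : Finset (ZMod n)) (hx0 : ∃ x : ZMod n, x ∉ S)

/-- length of the run of `S` starting at `a`. -/
def runlen (a : ZMod n) : ℕ := Nat.find (exists_add_notMem S hx0 a)

lemma runlen_spec (a : ZMod n) : a + (runlen S hx0 a : ZMod n) ∉ S :=
  Nat.find_spec (exists_add_notMem S hx0 a)

lemma runlen_min {a : ZMod n} {j : ℕ} (hj : j < runlen S hx0 a) : a + (j : ZMod n) ∈ S := by
  have := Nat.find_min (exists_add_notMem S hx0 a) hj
  simpa using this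

lemma runlen_pos {a : ZMod n} (ha : a ∈ S) : 0 < runlen S hx0 a := by
  rcases Nat.eq_zero_or_pos (runlen S hx0 a) with h | h
  · exfalso; have := runlen_spec S hx0 a; rw [h] at this; simp at this; exact this ha
  · exact h

/-- length of the run of `S` ending just before `x` (backwards from `x-1`). -/
def blen (x : ZMod n) : ℕ := Nat.find (exists_sub_notMem S hx0 x)

lemma blen_spec (x : ZMod n) : x - 1 - (blen S hx0 x : ZMod n) ∉ S :=
  Nat.find_spec (exists_sub_notMem S hx0 x)

lemma blen_min {x : ZMod n} {t : ℕ} (ht : t < blen S hx0 x) : x - 1 - (t : ZMod n) ∈ S := by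
  have := Nat.find_min (exists_sub_notMem S hx0 x) ht
  simpa using this

lemma blen_eq {i : ZMod n} {j : ℕ} (hi : i ∉ S)
    (hj : ∀ t : ℕ, t ≤ j → i + 1 + (t : ZMod n) ∈ S) :
    blen S hx0 (i + 1 + (j : ZMod n)) = j := by
  rw [blen, Nat.find_eq_iff]
  constructor
  · have : i + 1 + (j : ZMod n) - 1 - (j : ZMod n) = i := by ring
    rw [this]; exact hi
  · intro t ht
    rw [not_not]
    have hcast : ((j - 1 - t : ℕ) : ZMod n) = (j : ZMod n) - 1 - (t : ZMod n) := by
      have h1 : 1 + t ≤ j := by omega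
      have : j - 1 - t = j - (1 + t) := by omega
      rw [this, Nat.cast_sub h1]
      push_cast
      ring
    have : i + 1 + (j : ZMod n) - 1 - (t : ZMod n) = i + 1 + ((j - 1 - t : ℕ) : ZMod n) := by
      rw [hcast]; ring
    rw [this]
    exact hj _ (by omega)

def arc (i : ZMod n) : Finset (ZMod n) :=
  (Finset.range (runlen S hx0 (i + 1))).image fun j : ℕ => i + 1 + (j : ZMod n)

lemma arc_subset {i : ZMod n} : arc S hx0 i ⊆ S := by
  intro x hx
  simp only [arc, mem_image, mem_range] at hx
  obtain ⟨j, hj, rfl⟩ := hx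
  exact runlen_min S hx0 hj

lemma self_mem_arc {i : ZMod n} (hi : i + 1 ∈ S) : i + 1 ∈ arc S hx0 i := by
  simp only [arc, mem_image, mem_range]
  exact ⟨0, runlen_pos S hx0 hi, by simp⟩

lemma arc_isArc {i : ZMod n} (hi : i + 1 ∈ S) : IsArc (arc S hx0 i) :=
  ⟨i + 1, runlen S hx0 (i + 1), runlen_pos S hx0 hi, rfl⟩

lemma mem_arc_inv {i x : ZMod n} (hi : i ∉ S) (hx : x ∈ arc S hx0 i) :
    i = x - 1 - (blen S hx0 x : ZMod n) := by
  simp only [arc, mem_image, mem_range] at hx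
  obtain ⟨j, hj, rfl⟩ := hx
  rw [blen_eq S hx0 hi (fun t ht => runlen_min S hx0 (by omega))]
  ring

lemma cover {x : ZMod n} (hx : x ∈ S) : ∃ i ∈ bdry S, x ∈ arc S hx0 i := by
  set m := blen S hx0 x with hm
  set i := x - 1 - (m : ZMod n) with hidef
  have hiN : i ∉ S := blen_spec S hx0 x
  have hxi : x = i + 1 + (m : ZMod n) := by rw [hidef]; ring
  have hi1 : i + 1 ∈ S := by
    rcases Nat.eq_zero_or_pos m with h0 | hpos
    · have : i + 1 = x := by rw [hxi, h0]; push_cast; ring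
      rwa [this]
    · have : i + 1 = x - 1 - ((m - 1 : ℕ) : ZMod n) := by
        rw [hidef, Nat.cast_sub (by omega)]; push_cast; ring
      rw [this]
      exact blen_min S hx0 (by omega)
  have hall : ∀ t : ℕ, t ≤ m → i + 1 + (t : ZMod n) ∈ S := by
    intro t ht
    rcases eq_or_lt_of_le ht with rfl | htlt
    · rw [← hxi]; exact hx
    · have hc : ((m - 1 - t : ℕ) : ZMod n) = (m : ZMod n) - 1 - (t : ZMod n) := by
        have he : m - 1 - t = m - (1 + t) := by omega
        rw [he, Nat.cast_sub (by omega)]; push_cast; ring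
      have : i + 1 + (t : ZMod n) = x - 1 - ((m - 1 - t : ℕ) : ZMod n) := by
        rw [hidef, hc]; ring
      rw [this]
      exact blen_min S hx0 (by omega)
  have hmlt : m < runlen S hx0 (i + 1) := by
    by_contra hle
    push_neg at hle
    exact runlen_spec S hx0 (i + 1) (hall _ hle)
  refine ⟨i, ?_, ?_⟩
  · simp [bdry, hiN, hi1]
  · simp only [arc, mem_image, mem_range]
    exact ⟨m, hmlt, hxi.symm⟩


lemma start_unique {T : Finset (ZMod n)} (hT : IsArc T) {i i' : ZMod n}
    (hi : i ∉ T) (h1 : i + 1 ∈ T) (hi' : i' ∉ T) (h1' : i' + 1 ∈ T) : i = i' := by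
  obtain ⟨a, k, hk, rfl⟩ := hT
  have key : ∀ b : ZMod n, b ∉ ((Finset.range k).image fun j : ℕ => a + (j : ZMod n)) →
      b + 1 ∈ ((Finset.range k).image fun j : ℕ => a + (j : ZMod n)) → b + 1 = a := by
    intro b hb hb1
    simp only [mem_image, mem_range] at hb1
    obtain ⟨j, hj, hbe⟩ := hb1
    match j with
    | 0 => simpa using hbe.symm
    | j' + 1 =>
      exfalso
      apply hb
      simp only [mem_image, mem_range]
      refine ⟨j', by omega, ?_⟩
      have h2 : (a + (j' : ZMod n)) + 1 = b + 1 := by rw [← hbe]; push_cast; ring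
      exact add_right_cancel h2
  have e1 := key i hi h1
  have e2 := key i' hi' h1'
  have : i + 1 = i' + 1 := by rw [e1, e2]
  exact add_right_cancel this

include hx0 in
lemma cycL_eq : cycL S = (bdry S).card := by
  classical
  have hmem : (bdry S).card ∈ {m | ∃ P : Finset (Finset (ZMod n)), P.card = m ∧
      (∀ T ∈ P, IsArc T) ∧ (↑P : Set (Finset (ZMod n))).PairwiseDisjoint id ∧ P.sup id = S} := by
    refine ⟨(bdry S).image (arc S hx0), ?_, ?_, ?_, ?_⟩
    · apply Finset.card_image_of_injOn
      intro i hi i' hi' he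
      simp only [bdry, mem_coe, mem_filter] at hi hi'
      have h1 : i + 1 ∈ arc S hx0 i' := by rw [← he]; exact self_mem_arc S hx0 hi.2.2
      have e1 := mem_arc_inv S hx0 hi'.2.1 h1
      have e2 := mem_arc_inv S hx0 hi.2.1 (self_mem_arc S hx0 hi.2.2)
      rw [← e2] at e1; exact e1.symm
    · intro T hT
      simp only [mem_image] at hT
      obtain ⟨i, hi, rfl⟩ := hT
      simp only [bdry, mem_filter] at hi
      exact arc_isArc S hx0 hi.2.2
    · intro T hT T' hT' hne
      simp only [coe_image, Set.mem_image, mem_coe] at hT hT'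
      obtain ⟨i, hi, rfl⟩ := hT
      obtain ⟨i', hi', rfl⟩ := hT'
      simp only [bdry, mem_filter] at hi hi'
      simp only [Function.onFun, id]
      rw [Finset.disjoint_left]
      intro x hx hx'
      have e1 := mem_arc_inv S hx0 hi.2.1 hx
      have e2 := mem_arc_inv S hx0 hi'.2.1 hx'
      exact hne (by rw [e1.trans e2.symm])
    · ext x
      rw [Finset.mem_sup]
      constructor
      · rintro ⟨T, hT, hx⟩
        simp only [mem_image] at hT
        obtain ⟨i, _, rfl⟩ := hT
        exact arc_subset S hx0 hx
      · intro hx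
        obtain ⟨i, hi, hxi⟩ := cover S hx0 hx
        exact ⟨arc S hx0 i, Finset.mem_image_of_mem _ hi, hxi⟩
  have hlb : ∀ m ∈ {m | ∃ P : Finset (Finset (ZMod n)), P.card = m ∧
      (∀ T ∈ P, IsArc T) ∧ (↑P : Set (Finset (ZMod n))).PairwiseDisjoint id ∧ P.sup id = S},
      (bdry S).card ≤ m := by
    rintro m ⟨P, rfl, hArc, hdisj, hsup⟩
    have hex : ∀ i ∈ bdry S, ∃ T, T ∈ P ∧ i + 1 ∈ T := by
      intro i hi
      simp only [bdry, mem_filter] at hi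
      have : i + 1 ∈ P.sup id := by rw [hsup]; exact hi.2.2
      rw [Finset.mem_sup] at this
      obtain ⟨T, hT, hx⟩ := this
      exact ⟨T, hT, hx⟩
    set f : ZMod n → Finset (ZMod n) := fun i =>
      if h : ∃ T, T ∈ P ∧ i + 1 ∈ T then h.choose else ∅ with hf
    apply Finset.card_le_card_of_injOn f
    · intro i hi
      have h := hex i hi
      simp only [hf, dif_pos h]
      exact h.choose_spec.1
    · intro i hi i' hi' he
      simp only [mem_coe] at hi hi'
      have h := hex i hi
      have h' := hex i' hi'
      have hfi : f i ∈ P ∧ i + 1 ∈ f i := by simp only [hf, dif_pos h]; exact h.choose_spec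
      have hfi' : f i' ∈ P ∧ i' + 1 ∈ f i' := by simp only [hf, dif_pos h']; exact h'.choose_spec
      rw [he] at hfi
      have hsub : f i' ⊆ S := by
        rw [← hsup]; exact Finset.le_sup (f := id) hfi'.1
      simp only [bdry, mem_filter] at hi hi'
      exact start_unique (hArc _ hfi.1) (fun hc => hi.2.1 (hsub hc)) hfi.2
        (fun hc => hi'.2.1 (hsub hc)) hfi'.2
  exact le_antisymm (Nat.sInf_le hmem) (hlb _ (Nat.sInf_mem ⟨_, hmem⟩))

end Stmt1Aux

/-- for `0 < d_H(u,v) < n` and `S = {i : u_i ≠ v_i}`,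
`d_P(u,v) = d_H(u,v) + L(S)`. -/
theorem stmt1 {n : ℕ} [NeZero n] {α : Type*} [DecidableEq α] (u v : ZMod n → α)
    (h1 : 0 < hammingDist u v) (h2 : hammingDist u v < n)
    (S : Finset (ZMod n)) (hS : S = Finset.univ.filter fun i : ZMod n => u i ≠ v i) :
    pairDist u v = hammingDist u v + cycL S := by
  classical
  have hmemS : ∀ j : ZMod n, j ∈ S ↔ u j ≠ v j := by
    intro j; rw [hS]; simp
  have hsc : hammingDist u v = S.card := by
    rw [hS]; rfl
  have hx0 : ∃ x : ZMod n, x ∉ S := by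
    by_contra h
    push_neg at h
    have he : S = Finset.univ := Finset.eq_univ_iff_forall.mpr h
    rw [hsc, he, Finset.card_univ, ZMod.card] at h2
    exact lt_irrefl _ h2
  have hpd : pairDist u v = S.card + (Stmt1Aux.bdry S).card := by
    unfold pairDist Stmt1Aux.bdry
    have hcong : (Finset.univ.filter fun i : ZMod n => (u i, u (i + 1)) ≠ (v i, v (i + 1))) =
        (Finset.univ.filter fun i : ZMod n => i ∈ S) ∪
          (Finset.univ.filter fun i : ZMod n => i ∉ S ∧ i + 1 ∈ S) := by
      ext i
      simp only [Finset.mem_filter, Finset.mem_union, Finset.mem_univ, true_and, hmemS,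
        Prod.ext_iff, ne_eq, not_and]
      tauto
    rw [hcong, Finset.card_union_of_disjoint]
    · congr 1
      congr 1
      ext i; simp
    · rw [Finset.disjoint_left]
      intro i hi hi'
      simp only [Finset.mem_filter] at hi hi'
      exact hi'.2.1 hi.2
  rw [hpd, hsc, Stmt1Aux.cycL_eq S hx0]
end

section
/- Let u, v ∈ Σ^n be two vectors over an alphabet Σ. If 0 < d_H(u,v) < n, then d_H(u,v) + 1 ≤ d_P(u,v) ≤ min{2·d_H(u,v), n}. Moreover, d_P(u,v) = 0 if d_H(u,v) = 0, and d_P(u,v) = n if d_H(u,v) = n. -/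
open Polynomial

/-- basic relations between the pair-distance and the Hamming distance. -/
theorem stmt2 {n : ℕ} [NeZero n] {α : Type*} [DecidableEq α] (u v : ZMod n → α) :
    (0 < hammingDist u v → hammingDist u v < n →
      hammingDist u v + 1 ≤ pairDist u v ∧ pairDist u v ≤ min (2 * hammingDist u v) n) ∧
    (hammingDist u v = 0 → pairDist u v = 0) ∧
    (hammingDist u v = n → pairDist u v = n) := by
  classical
  set D : Finset (ZMod n) := Finset.univ.filter (fun i => u i ≠ v i) with hD
  set E : Finset (ZMod n) := Finset.univ.filter (fun i => u (i+1) ≠ v (i+1)) with hE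
  set P : Finset (ZMod n) := Finset.univ.filter
    (fun i : ZMod n => (u i, u (i + 1)) ≠ (v i, v (i + 1))) with hP
  have hdh : hammingDist u v = D.card := rfl
  have hdp : pairDist u v = P.card := rfl
  have hmemP : ∀ i : ZMod n, i ∈ P ↔ (u i ≠ v i ∨ u (i+1) ≠ v (i+1)) := by
    intro i
    simp only [hP, Finset.mem_filter, Finset.mem_univ, true_and, Prod.ext_iff, not_and_or,
      ne_eq]
  have hDP : D ⊆ P := by
    intro i hi
    rw [hmemP]
    exact Or.inl (by simpa [hD] using hi)
  have hPsub : P ⊆ D ∪ E := by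
    intro i hi
    rw [hmemP] at hi
    rcases hi with h | h
    · exact Finset.mem_union_left _ (by simp [hD, h])
    · exact Finset.mem_union_right _ (by simp [hE, h])
  have hcardE : E.card = D.card := by
    apply Finset.card_bij (fun i _ => i + 1)
    · intro i hi
      simp only [hD, Finset.mem_filter, Finset.mem_univ, true_and]
      simpa [hE] using hi
    · intro a _ b _ h
      exact add_right_cancel h
    · intro b hb
      refine ⟨b - 1, ?_, by rw [sub_add_cancel]⟩
      simp only [hE, Finset.mem_filter, Finset.mem_univ, true_and, sub_add_cancel]
      simpa [hD] using hb
  refine ⟨fun h0 hn => ⟨?_, le_min ?_ ?_⟩, fun h0 => ?_, fun hn => ?_⟩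
  · rw [hdh, hdp]
    by_contra hlt
    push_neg at hlt
    have hcards : P.card ≤ D.card := by omega
    have hPD : P = D := (Finset.eq_of_subset_of_card_le hDP hcards).symm
    have hED : E = D := by
      apply Finset.eq_of_subset_of_card_le _ (le_of_eq hcardE.symm)
      intro i hi
      rw [← hPD, hmemP]
      exact Or.inr (by simpa [hE] using hi)
    have hshift : ∀ i : ZMod n, i ∈ D ↔ i + 1 ∈ D := by
      intro i
      nth_rewrite 1 [← hED]
      simp [hE, hD]
    obtain ⟨i₀, hi₀⟩ : D.Nonempty := Finset.card_pos.mp (by rw [hdh] at h0; omega)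
    have hall : ∀ k : ℕ, i₀ + (k : ZMod n) ∈ D := by
      intro k
      induction k with
      | zero => simpa using hi₀
      | succ k ih =>
        have := (hshift (i₀ + (k : ZMod n))).mp ih
        rwa [add_assoc, ← Nat.cast_succ] at this
    have hDuniv : D = Finset.univ := by
      apply Finset.eq_univ_of_forall
      intro j
      have := hall (j - i₀).val
      rwa [ZMod.natCast_val, ZMod.cast_id, add_sub_cancel] at this
    rw [hdh, hDuniv, Finset.card_univ, ZMod.card] at hn
    omega
  · rw [hdh, hdp]
    calc P.card ≤ (D ∪ E).card := Finset.card_le_card hPsub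
      _ ≤ D.card + E.card := Finset.card_union_le _ _
      _ = 2 * D.card := by omega
  · rw [hdp]
    calc P.card ≤ Fintype.card (ZMod n) := Finset.card_le_univ _
      _ = n := ZMod.card n
  · have : u = v := hammingDist_eq_zero.mp h0
    subst this
    simp [pairDist]
  · have hDuniv : D = Finset.univ := by
      apply Finset.eq_univ_of_card
      rw [← hdh, hn, ZMod.card]
    have hPuniv : P = Finset.univ :=
      Finset.eq_univ_of_forall fun i => hDP (hDuniv ▸ Finset.mem_univ i)
    rw [hdp, hPuniv, Finset.card_univ, ZMod.card]
end

section
/- Let c = (c_0, c_1, …, c_{n−1}) ∈ F_q^n with 0 < w_H(c) < n, and let I(c) = L({0 ≤ i ≤ n−1 : c_i ≠ 0}). Then w_P(c) = w_H(c) + I(c), and consequently w_H(c) + 1 ≤ w_P(c) ≤ min{2·w_H(c), n}. -/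
open Polynomial

/-!
The indices `i` with `(c i, c (i + 1)) ≠ (0, 0)` are the support `S` of `c` together with the
left boundary of `S`: the points outside `S` whose successor lies in `S`. Each arc has at most
one left boundary point, so a partition of `S` into arcs has at least as many parts as `S` has
left boundary points; conversely the maximal runs of `S`, one starting after each left boundary
point, form such a partition. The bounds follow since, for `∅ ≠ S ≠ ZMod n`, the left boundary
is nonempty and `i ↦ i + 1` maps it injectively into `S`.
-/

open Finset

section Runs

variable {n : ℕ}

-- When `S = univ` the set is empty and `sInf ∅ = 0`.
noncomputable def runLength (S : Finset (ZMod n)) (i : ZMod n) : ℕ :=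
  sInf {k : ℕ | i + 1 + k ∉ S}

noncomputable def runFrom (S : Finset (ZMod n)) (i : ZMod n) : Finset (ZMod n) :=
  (range (runLength S i)).image fun j : ℕ => i + 1 + j

variable {S : Finset (ZMod n)} {i i' s : ZMod n}

lemma mem_runFrom : s ∈ runFrom S i ↔ ∃ j < runLength S i, i + 1 + j = s := by
  simp [runFrom]

lemma add_mem_of_lt_runLength {j : ℕ} (hj : j < runLength S i) : i + 1 + j ∈ S :=
  not_not.1 (Nat.notMem_of_lt_sInf hj)

lemma runFrom_subset : runFrom S i ⊆ S := fun _ hs => by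
  obtain ⟨j, hj, rfl⟩ := mem_runFrom.1 hs
  exact add_mem_of_lt_runLength hj

lemma eq_of_mem_runFrom (hi : i ∉ S) (hi' : i' ∉ S) (hs : s ∈ runFrom S i)
    (hs' : s ∈ runFrom S i') : i = i' := by
  obtain ⟨j, hj, rfl⟩ := mem_runFrom.1 hs
  obtain ⟨j', hj', h⟩ := mem_runFrom.1 hs'
  wlog hle : j ≤ j' generalizing i i' j j'
  · exact (this hi' hi j' hj' (mem_runFrom.2 ⟨j', hj', rfl⟩) (h ▸ hs) j hj h.symm
      (le_of_not_ge hle)).symm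
  obtain ⟨d, rfl⟩ := Nat.exists_eq_add_of_le hle
  rcases d with _ | d
  · simpa using h.symm
  · refine absurd (add_mem_of_lt_runLength (S := S) (i := i') (j := d) (by omega)) ?_
    convert hi using 2
    push_cast at h
    linear_combination h

end Runs

variable {n : ℕ} [NeZero n]

def leftBoundary (S : Finset (ZMod n)) : Finset (ZMod n) :=
  univ.filter fun i => i ∉ S ∧ i + 1 ∈ S

@[simp]
lemma mem_leftBoundary {S : Finset (ZMod n)} {i : ZMod n} :
    i ∈ leftBoundary S ↔ i ∉ S ∧ i + 1 ∈ S := by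
  simp [leftBoundary]

lemma card_leftBoundary_le (S : Finset (ZMod n)) : #(leftBoundary S) ≤ #S :=
  card_le_card_of_injOn (· + 1) (fun _ hi => (mem_leftBoundary.1 hi).2)
    (add_left_injective 1).injOn

lemma IsArc.card_leftBoundary_le_one {T : Finset (ZMod n)} (hT : IsArc T) :
    #(leftBoundary T) ≤ 1 := by
  obtain ⟨a, k, -, rfl⟩ := hT
  suffices h : ∀ x ∈ leftBoundary ((range k).image fun j : ℕ => a + (j : ZMod n)), x + 1 = a from
    card_le_one.2 fun x hx y hy => add_right_cancel ((h x hx).trans (h y hy).symm)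
  intro x hx
  obtain ⟨hxT, j, hj, hxj⟩ := by simpa using hx
  rcases j with _ | j
  · simpa using hxj.symm
  · refine (hxT j (by omega) ?_).elim
    push_cast at hxj
    linear_combination hxj

lemma card_leftBoundary_le_of_sup_eq {S : Finset (ZMod n)} {P : Finset (Finset (ZMod n))}
    (hP : ∀ T ∈ P, IsArc T) (hPS : P.sup id = S) : #(leftBoundary S) ≤ #P := by
  have hsub : leftBoundary S ⊆ P.biUnion leftBoundary := by
    intro i hi
    obtain ⟨hiS, hi1⟩ := mem_leftBoundary.1 hi
    obtain ⟨T, hT, hiT⟩ := mem_sup.1 (hPS ▸ hi1)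
    have hTS : T ⊆ S := hPS ▸ le_sup (f := id) hT
    exact mem_biUnion.2 ⟨T, hT, mem_leftBoundary.2 ⟨fun h => hiS (hTS h), hiT⟩⟩
  calc #(leftBoundary S) ≤ #(P.biUnion leftBoundary) := card_le_card hsub
    _ ≤ ∑ T ∈ P, #(leftBoundary T) := card_biUnion_le
    _ ≤ ∑ _T ∈ P, 1 := sum_le_sum fun T hT => (hP T hT).card_leftBoundary_le_one
    _ = #P := by simp

section Runs

variable {S : Finset (ZMod n)} {i s : ZMod n}

lemma add_runLength_notMem (hS : S ≠ univ) (i : ZMod n) : i + 1 + runLength S i ∉ S := by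
  obtain ⟨z, hz⟩ := not_forall.1 (mt eq_univ_iff_forall.2 hS)
  exact Nat.sInf_mem (s := {k : ℕ | i + 1 + k ∉ S}) ⟨(z - (i + 1)).val, by simpa using hz⟩

lemma runLength_pos (hS : S ≠ univ) (hi : i + 1 ∈ S) : 0 < runLength S i :=
  Nat.pos_of_ne_zero fun h => add_runLength_notMem hS i (by simpa [h] using hi)

lemma add_one_mem_runFrom (hS : S ≠ univ) (hi : i + 1 ∈ S) : i + 1 ∈ runFrom S i :=
  mem_runFrom.2 ⟨0, runLength_pos hS hi, by simp⟩

lemma isArc_runFrom (hS : S ≠ univ) (hi : i + 1 ∈ S) : IsArc (runFrom S i) :=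
  ⟨i + 1, runLength S i, runLength_pos hS hi, rfl⟩

lemma exists_mem_runFrom (hS : S ≠ univ) (hs : s ∈ S) :
    ∃ i ∈ leftBoundary S, s ∈ runFrom S i := by
  obtain ⟨z, hz⟩ := not_forall.1 (mt eq_univ_iff_forall.2 hS)
  have hex : ∃ m : ℕ, s - m ∉ S := ⟨(s - z).val, by simpa using hz⟩
  obtain ⟨k, hk⟩ : ∃ k, Nat.find hex = k + 1 :=
    Nat.exists_eq_succ_of_ne_zero fun h => Nat.find_spec hex (by simpa [h] using hs)
  have hmin : ∀ j ≤ k, s - (j : ℕ) ∈ S := fun j hj => not_not.1 (Nat.find_min hex (by omega))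
  set i := s - ((k + 1 : ℕ) : ZMod n)
  have hiS : i ∉ S := by
    have := Nat.find_spec hex
    rwa [hk] at this
  have hi1 : i + 1 = s - (k : ZMod n) := by push_cast [i]; ring
  refine ⟨i, mem_leftBoundary.2 ⟨hiS, hi1 ▸ hmin k le_rfl⟩,
    mem_runFrom.2 ⟨k, ?_, by rw [hi1]; ring⟩⟩
  by_contra! hle
  apply add_runLength_notMem hS i
  convert hmin (k - runLength S i) (Nat.sub_le _ _) using 1
  rw [hi1, Nat.cast_sub hle]; ring

lemma leftBoundary_nonempty (hS : S ≠ univ) (hne : S.Nonempty) : (leftBoundary S).Nonempty :=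
  let ⟨_, hs⟩ := hne
  let ⟨i, hi, _⟩ := exists_mem_runFrom hS hs
  ⟨i, hi⟩

lemma cycL_eq_card_leftBoundary (hS : S ≠ univ) : cycL S = #(leftBoundary S) := by
  have hmem : #(leftBoundary S) ∈ {m | ∃ P : Finset (Finset (ZMod n)), #P = m ∧
      (∀ T ∈ P, IsArc T) ∧ (↑P : Set (Finset (ZMod n))).PairwiseDisjoint id ∧ P.sup id = S} := by
    refine ⟨(leftBoundary S).image (runFrom S), card_image_of_injOn ?_, ?_, ?_, ?_⟩
    · intro i hi i' hi' h
      have hi := mem_leftBoundary.1 hi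
      have hi' := mem_leftBoundary.1 hi'
      exact eq_of_mem_runFrom hi.1 hi'.1 (add_one_mem_runFrom hS hi.2)
        (h ▸ add_one_mem_runFrom hS hi.2)
    · simp only [mem_image, mem_leftBoundary]
      rintro _ ⟨i, hi, rfl⟩
      exact isArc_runFrom hS hi.2
    · intro T hT T' hT' hne
      obtain ⟨i, hi, rfl⟩ := mem_image.1 hT
      obtain ⟨i', hi', rfl⟩ := mem_image.1 hT'
      exact disjoint_left.2 fun s hs hs' => hne (congrArg _
        (eq_of_mem_runFrom (mem_leftBoundary.1 hi).1 (mem_leftBoundary.1 hi').1 hs hs'))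
    · ext s
      simp only [mem_sup, mem_image, id]
      constructor
      · rintro ⟨_, ⟨i, -, rfl⟩, hs⟩
        exact runFrom_subset hs
      · intro hs
        obtain ⟨i, hi, his⟩ := exists_mem_runFrom hS hs
        exact ⟨_, ⟨i, hi, rfl⟩, his⟩
  refine le_antisymm (Nat.sInf_le hmem) (le_csInf ⟨_, hmem⟩ ?_)
  rintro _ ⟨P, rfl, hP, -, hPS⟩
  exact card_leftBoundary_le_of_sup_eq hP hPS

end Runs

lemma pairDist_zero_eq {α : Type*} [Zero α] [DecidableEq α] (c : ZMod n → α) :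
    pairDist c 0 = hammingNorm c + #(leftBoundary (univ.filter fun i => c i ≠ 0)) := by
  have hsplit :
      (univ.filter fun i => (c i, c (i + 1)) ≠ ((0 : ZMod n → α) i, (0 : ZMod n → α) (i + 1))) =
        (univ.filter fun i => c i ≠ 0) ∪ leftBoundary (univ.filter fun i => c i ≠ 0) := by
    ext i
    simp only [mem_filter, mem_univ, true_and, Pi.zero_apply, ne_eq, Prod.mk.injEq, mem_union,
      mem_leftBoundary, not_not]
    tauto
  rw [pairDist, hsplit, card_union_of_disjoint]
  · rfl
  · exact disjoint_left.2 fun i hi hi' => (mem_leftBoundary.1 hi').1 hi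

theorem stmt3_general {n : ℕ} [NeZero n] {F : Type*} [Field F] [DecidableEq F]
    (c : ZMod n → F) (h1 : 0 < hammingNorm c) (h2 : hammingNorm c < n) :
    pairDist c 0 = hammingNorm c + cycL (Finset.univ.filter fun i : ZMod n => c i ≠ 0) ∧
    hammingNorm c + 1 ≤ pairDist c 0 ∧ pairDist c 0 ≤ min (2 * hammingNorm c) n := by
  set S := univ.filter fun i : ZMod n => c i ≠ 0
  have hwt : hammingNorm c = #S := rfl
  have hS : S ≠ univ := fun h => h2.ne (by rw [hwt, h, card_univ, ZMod.card])
  have hB : 0 < #(leftBoundary S) := (leftBoundary_nonempty hS (card_pos.1 h1)).card_pos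
  have hBS : #(leftBoundary S) ≤ #S := card_leftBoundary_le S
  have hn : pairDist c 0 ≤ n := (card_filter_le _ _).trans (by rw [card_univ, ZMod.card])
  have hpair : pairDist c 0 = #S + #(leftBoundary S) := pairDist_zero_eq c
  rw [cycL_eq_card_leftBoundary hS, hpair, hwt]
  exact ⟨rfl, by omega, le_min (by omega) (hpair ▸ hn)⟩

/-- for `c ∈ F_q^n` with `0 < w_H(c) < n`, the pair-weight satisfies
`w_P(c) = w_H(c) + I(c)` where `I(c) = L({i : c_i ≠ 0})`, and consequently
`w_H(c) + 1 ≤ w_P(c) ≤ min{2 w_H(c), n}`. -/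
theorem stmt3 {n : ℕ} [NeZero n] {F : Type*} [Field F] [Fintype F] [DecidableEq F]
    (c : ZMod n → F) (h1 : 0 < hammingNorm c) (h2 : hammingNorm c < n) :
    pairDist c 0 = hammingNorm c + cycL (Finset.univ.filter fun i : ZMod n => c i ≠ 0) ∧
    hammingNorm c + 1 ≤ pairDist c 0 ∧ pairDist c 0 ≤ min (2 * hammingNorm c) n :=
  stmt3_general c h1 h2
end

section
/- Let C ⊆ F_q^n be a linear code whose minimum Hamming distance d satisfies d < n, and let d_p be the minimum pair-distance of C. Then d + 1 ≤ d_p ≤ min{2d, n}. -/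
open Polynomial

lemma exists_boundary {n : ℕ} [NeZero n] {F : Type*} [Zero F]
    (w : ZMod n → F) (j k : ZMod n) (hj : w j ≠ 0) (hk : w k = 0) :
    ∃ i : ZMod n, w i = 0 ∧ w (i + 1) ≠ 0 := by
  have hex : ∃ m : ℕ, w (k + (m : ZMod n)) ≠ 0 := by
    refine ⟨(j - k).val, ?_⟩
    have h1 : ((j - k).val : ZMod n) = j - k := ZMod.natCast_rightInverse (j - k)
    rw [h1]
    simpa using hj
  classical
  set m := Nat.find hex with hmdef
  have hm : w (k + (m : ZMod n)) ≠ 0 := Nat.find_spec hex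
  have hm0 : 0 < m := by
    rcases Nat.eq_zero_or_pos m with h | h
    · exfalso; apply hm; rw [h]; simpa using hk
    · exact h
  refine ⟨k + ((m - 1 : ℕ) : ZMod n), ?_, ?_⟩
  · by_contra h
    exact (Nat.find_min hex (by omega : m - 1 < m)) h
  · have : k + ((m - 1 : ℕ) : ZMod n) + 1 = k + (m : ZMod n) := by
      have : ((m - 1 : ℕ) : ZMod n) + 1 = (m : ZMod n) := by
        have h2 := Nat.sub_add_cancel hm0
        conv_rhs => rw [← h2]
        push_cast
        ring
      rw [add_assoc, this]
    rw [this]; exact hm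

/-- if a linear code `C ⊆ F_q^n` has minimum Hamming distance `d < n`
and minimum pair-distance `d_p`, then `d + 1 ≤ d_p ≤ min{2d, n}`. -/
theorem stmt4 {n : ℕ} [NeZero n] {F : Type*} [Field F] [Fintype F] [DecidableEq F]
    (Code : Submodule F (ZMod n → F)) (d dp : ℕ) (hdn : d < n)
    (hd : (∀ c ∈ Code, c ≠ 0 → d ≤ hammingNorm c) ∧ ∃ c ∈ Code, c ≠ 0 ∧ hammingNorm c = d)
    (hdp : IsMinPairDist (Code : Set (ZMod n → F)) dp) :
    d + 1 ≤ dp ∧ dp ≤ min (2 * d) n := by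
  classical
  obtain ⟨hmin, c, hcC, hc0, hcd⟩ := hd
  obtain ⟨hlb, u, huC, v, hvC, huv, hP⟩ := hdp
  have hcardZ : Fintype.card (ZMod n) = n := ZMod.card n
  constructor
  · -- d + 1 ≤ dp
    set w : ZMod n → F := u - v with hw
    have hwC : w ∈ Code := Submodule.sub_mem _ huC hvC
    have hw0 : w ≠ 0 := sub_ne_zero.mpr huv
    have hdw : d ≤ hammingNorm w := hmin w hwC hw0
    have hS : pairDist u v =
        (Finset.univ.filter fun i : ZMod n => w i ≠ 0 ∨ w (i + 1) ≠ 0).card := by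
      unfold pairDist
      congr 1
      ext i
      simp only [Finset.mem_filter, Finset.mem_univ, true_and, hw, Pi.sub_apply,
        sub_ne_zero, Prod.ext_iff, not_and_or, ne_eq]
    have hnorm : hammingNorm w = (Finset.univ.filter fun i : ZMod n => w i ≠ 0).card := rfl
    rw [← hP, hS]
    by_cases hfull : hammingNorm w = n
    · -- w never zero, so the pair set is everything
      have hall : ∀ i : ZMod n, w i ≠ 0 := by
        intro i
        by_contra h
        have hsub : (Finset.univ.filter fun i : ZMod n => w i ≠ 0) ⊆ Finset.univ.erase i := by
          intro x hx
          simp only [Finset.mem_filter, Finset.mem_univ, true_and] at hx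
          refine Finset.mem_erase.mpr ⟨?_, Finset.mem_univ x⟩
          rintro rfl; exact hx h
        have := Finset.card_le_card hsub
        rw [Finset.card_erase_of_mem (Finset.mem_univ i), Finset.card_univ, hcardZ] at this
        rw [hnorm] at hfull
        omega
      have : (Finset.univ.filter fun i : ZMod n => w i ≠ 0 ∨ w (i + 1) ≠ 0) = Finset.univ := by
        apply Finset.filter_true_of_mem
        intro i _; exact Or.inl (hall i)
      rw [this, Finset.card_univ, hcardZ]
      omega
    · -- there is some k with w k = 0
      have hle : hammingNorm w ≤ n := by
        rw [hnorm]
        calc _ ≤ Finset.univ.card := Finset.card_le_card (Finset.filter_subset _ _)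
        _ = n := by rw [Finset.card_univ, hcardZ]
      obtain ⟨j, hj⟩ : ∃ j, w j ≠ 0 := Function.ne_iff.mp hw0
      obtain ⟨k, hk⟩ : ∃ k, w k = 0 := by
        by_contra h
        push_neg at h
        apply hfull
        rw [hnorm, Finset.filter_true_of_mem (fun i _ => h i), Finset.card_univ, hcardZ]
      obtain ⟨i, hi0, hi1⟩ := exists_boundary w j k hj hk
      have hsub : insert i (Finset.univ.filter fun i : ZMod n => w i ≠ 0) ⊆
          Finset.univ.filter fun i : ZMod n => w i ≠ 0 ∨ w (i + 1) ≠ 0 := by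
        intro x hx
        rcases Finset.mem_insert.mp hx with rfl | hx
        · simp only [Finset.mem_filter, Finset.mem_univ, true_and]; exact Or.inr hi1
        · simp only [Finset.mem_filter, Finset.mem_univ, true_and] at hx ⊢; exact Or.inl hx
      have hnotmem : i ∉ (Finset.univ.filter fun i : ZMod n => w i ≠ 0) := by
        simp [hi0]
      have := Finset.card_le_card hsub
      rw [Finset.card_insert_of_notMem hnotmem, ← hnorm] at this
      omega
  · refine le_min ?_ ?_
    · -- dp ≤ 2 * d
      have h0 : (0 : ZMod n → F) ∈ Code := Submodule.zero_mem _
      have hle := hlb c hcC 0 h0 hc0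
      refine hle.trans ?_
      unfold pairDist
      have hset : (Finset.univ.filter fun i : ZMod n =>
          (c i, c (i + 1)) ≠ ((0 : ZMod n → F) i, (0 : ZMod n → F) (i + 1))) ⊆
          (Finset.univ.filter fun i : ZMod n => c i ≠ 0) ∪
          ((Finset.univ.filter fun i : ZMod n => c i ≠ 0).image fun x => x - 1) := by
        intro x hx
        simp only [Finset.mem_filter, Finset.mem_univ, true_and, Pi.zero_apply,
          Prod.ext_iff, not_and_or, ne_eq] at hx
        rcases hx with h | h
        · exact Finset.mem_union_left _ (by simpa using h)
        · refine Finset.mem_union_right _ ?_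
          refine Finset.mem_image.mpr ⟨x + 1, by simpa using h, by ring⟩
      calc _ ≤ ((Finset.univ.filter fun i : ZMod n => c i ≠ 0) ∪
          ((Finset.univ.filter fun i : ZMod n => c i ≠ 0).image fun x => x - 1)).card :=
            Finset.card_le_card hset
      _ ≤ (Finset.univ.filter fun i : ZMod n => c i ≠ 0).card +
          ((Finset.univ.filter fun i : ZMod n => c i ≠ 0).image fun x => x - 1).card :=
            Finset.card_union_le _ _
      _ ≤ (Finset.univ.filter fun i : ZMod n => c i ≠ 0).card +
          (Finset.univ.filter fun i : ZMod n => c i ≠ 0).card := by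
            exact Nat.add_le_add_left Finset.card_image_le _
      _ = 2 * d := by
            have hnc : (Finset.univ.filter fun i : ZMod n => c i ≠ 0).card = d := by
              rw [← hcd]; unfold hammingNorm; congr 1
            rw [hnc]; ring
    · -- dp ≤ n
      rw [← hP]
      unfold pairDist
      calc _ ≤ Finset.univ.card := Finset.card_le_card (Finset.filter_subset _ _)
      _ = n := by rw [Finset.card_univ, hcardZ]
end

section
/- Let q ≥ 2 and 2 ≤ d_p ≤ n. If C ⊆ Σ^n is a symbol-pair code over an alphabet Σ of size q with |C| = M and minimum pair-distance d_p, then M ≤ q^{n − d_p + 2}. -/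
open Polynomial

/-- Singleton-type bound: a symbol-pair code `C ⊆ Σ^n` over an alphabet of
size `q ≥ 2` with minimum pair-distance `d_p`, `2 ≤ d_p ≤ n`, satisfies `|C| ≤ q^{n−d_p+2}`. -/
theorem stmt5 {n q dp : ℕ} [NeZero n] {α : Type*} [DecidableEq α] [Fintype α]
    (hq : Fintype.card α = q) (hq2 : 2 ≤ q) (hdp2 : 2 ≤ dp) (hdpn : dp ≤ n)
    (Code : Finset (ZMod n → α)) (M : ℕ) (hM : Code.card = M)
    (hmin : IsMinPairDist (↑Code : Set (ZMod n → α)) dp) :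
    M ≤ q ^ (n - dp + 2) := by
  subst hM
  -- The projection onto coordinates dp-2, dp-1, ..., n-1 is injective on the code.
  set m := n - dp + 2 with hm
  have key : Set.InjOn (fun (u : ZMod n → α) (j : Fin m) => u ((dp - 2 : ℕ) + (j : ZMod n)))
      (↑Code : Set (ZMod n → α)) := by
    intro u hu v hv huv
    by_contra hne
    have hlow : ∀ k : ZMod n, u k ≠ v k → k.val < dp - 2 := by
      intro k hk
      by_contra hge
      push_neg at hge
      have hkn : k.val < n := ZMod.val_lt k
      have hj : k.val - (dp - 2) < m := by omega
      have := congrFun huv ⟨k.val - (dp - 2), hj⟩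
      simp only at this
      apply hk
      have hcast : ((dp - 2 : ℕ) : ZMod n) + ((k.val - (dp - 2) : ℕ) : ZMod n) = k := by
        rw [← Nat.cast_add]
        have : dp - 2 + (k.val - (dp - 2)) = k.val := by omega
        rw [this, ZMod.natCast_val, ZMod.cast_id]
      rwa [hcast] at this
    -- the pair-distance set is contained in an arc of length dp - 1
    have hsub : (Finset.univ.filter fun i : ZMod n =>
        (u i, u (i + 1)) ≠ (v i, v (i + 1))) ⊆
        (Finset.range (dp - 1)).image fun j : ℕ => (-1 : ZMod n) + (j : ZMod n) := by
      intro i hi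
      simp only [Finset.mem_filter, Finset.mem_univ, true_and, ne_eq, Prod.mk.injEq,
        not_and_or] at hi
      simp only [Finset.mem_image, Finset.mem_range]
      rcases hi with h1 | h2
      · have hv1 := hlow i h1
        refine ⟨i.val + 1, by omega, ?_⟩
        push_cast
        rw [ZMod.natCast_val, ZMod.cast_id]
        ring
      · have hv2 := hlow (i + 1) h2
        refine ⟨(i + 1).val, by omega, ?_⟩
        rw [ZMod.natCast_val, ZMod.cast_id]
        ring
    have hle : pairDist u v ≤ dp - 1 := by
      calc pairDist u v ≤ ((Finset.range (dp - 1)).image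
            fun j : ℕ => (-1 : ZMod n) + (j : ZMod n)).card := Finset.card_le_card hsub
        _ ≤ dp - 1 := (Finset.card_image_le).trans (by simp)
    have hge := hmin.1 u hu v hv hne
    omega
  -- count
  have := Finset.card_le_card_of_injOn (fun (u : ZMod n → α) (j : Fin m) =>
      u ((dp - 2 : ℕ) + (j : ZMod n))) (fun u _ => Finset.mem_univ _) key
  calc Code.card ≤ (Finset.univ : Finset (Fin m → α)).card := this
    _ = q ^ m := by simp [Fintype.card_fun, hq]
end

section
/- Let C be an [n, n−d+1, d]_q MDS linear code over F_q with d < n. Then C is an (n, d+1)_q MDS symbol-pair code; that is, the minimum pair-distance of C equals d+1 and |C| = q^{n−(d+1)+2}. -/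
open Polynomial

section Helpers

open Finset

variable {n : ℕ} [NeZero n] {F : Type*} [Field F] [DecidableEq F]

/-- The set of pair-indices of a vector. -/
def pairSet (c : ZMod n → F) : Finset (ZMod n) :=
  Finset.univ.filter fun i => c i ≠ 0 ∨ c (i + 1) ≠ 0

lemma pairDist_eq_card (u v : ZMod n → F) : pairDist u v = (pairSet (u - v)).card := by
  unfold pairDist pairSet
  congr 1
  apply Finset.filter_congr
  intro i _
  simp only [ne_eq, Prod.mk.injEq, not_and_or, Pi.sub_apply, sub_eq_zero]

lemma suppSet_subset (c : ZMod n → F) :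
    (Finset.univ.filter fun i => c i ≠ 0) ⊆ pairSet c := by
  intro i hi
  simp only [pairSet, mem_filter, mem_univ, true_and] at hi ⊢
  exact Or.inl hi

lemma lower_bound (c : ZMod n → F) (hc : c ≠ 0) (h : hammingNorm c < n) :
    hammingNorm c + 1 ≤ (pairSet c).card := by
  have hsupp : hammingNorm c = (Finset.univ.filter fun i => c i ≠ 0).card := rfl
  -- find a boundary index
  have hb : ∃ i : ZMod n, c i = 0 ∧ c (i + 1) ≠ 0 := by
    by_contra hcon
    push_neg at hcon
    have key : ∀ i : ZMod n, c i ≠ 0 := by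
      obtain ⟨a, ha⟩ : ∃ a, c a ≠ 0 := by
        by_contra h'
        push_neg at h'
        exact hc (funext h')
      have step : ∀ k : ℕ, c (a - k) ≠ 0 := by
        intro k
        induction k with
        | zero => simpa using ha
        | succ m ih =>
          have : (a - (m + 1 : ℕ)) + 1 = a - m := by push_cast; ring
          intro h0
          exact ih (by rw [← this]; exact hcon _ h0)
      intro i
      have : a - ((a - i).val : ℕ) = i := by
        rw [ZMod.natCast_rightInverse (a - i)]; ring
      rw [← this]; exact step _
    have : (Finset.univ.filter fun i => c i ≠ 0) = Finset.univ := by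
      apply Finset.eq_univ_of_forall
      intro i; simp [key i]
    rw [hsupp, this, Finset.card_univ, ZMod.card] at h
    exact lt_irrefl _ h
  obtain ⟨i, hi0, hi1⟩ := hb
  rw [hsupp]
  have hss : (Finset.univ.filter fun i => c i ≠ 0) ⊂ pairSet c := by
    refine ⟨suppSet_subset c, fun hsub => ?_⟩
    have : i ∈ pairSet c := by simp [pairSet, hi1]
    have := hsub this
    simp only [mem_filter, mem_univ, true_and] at this
    exact this hi0
  exact Finset.card_lt_card hss

end Helpers

/-- an `[n, n−d+1, d]_q` MDS linear code with `d < n` is an `(n, d+1)_q`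
MDS symbol-pair code: its minimum pair-distance is `d+1` and `|C| = q^{n−(d+1)+2}`. -/
theorem stmt6 {n q d : ℕ} [NeZero n] {F : Type*} [Field F] [Fintype F] [DecidableEq F]
    (hq : Fintype.card F = q)
    (Code : Submodule F (ZMod n → F))
    (hdim : Module.finrank F Code = n - d + 1)
    (hd : (∀ c ∈ Code, c ≠ 0 → d ≤ hammingNorm c) ∧ ∃ c ∈ Code, c ≠ 0 ∧ hammingNorm c = d)
    (hdn : d < n) :
    IsMinPairDist (Code : Set (ZMod n → F)) (d + 1) ∧
      Nat.card Code = q ^ (n - (d + 1) + 2) := by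
  obtain ⟨hmin, -⟩ := hd
  have part1 : ∀ u ∈ Code, ∀ v ∈ Code, u ≠ v → d + 1 ≤ pairDist u v := by
    intro u hu v hv huv
    have hc : u - v ∈ Code := Code.sub_mem hu hv
    have hc0 : u - v ≠ 0 := sub_ne_zero.mpr huv
    rw [pairDist_eq_card]
    rcases lt_or_ge (hammingNorm (u - v)) n with h | h
    · have h1 := hmin _ hc hc0
      have h2 := lower_bound _ hc0 h
      omega
    · have hfull : (Finset.univ.filter fun i => (u - v) i ≠ 0) = Finset.univ := by
        apply Finset.eq_univ_of_card
        have hle := Finset.card_filter_le Finset.univ (fun i : ZMod n => (u - v) i ≠ 0)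
        have hcard : Fintype.card (ZMod n) = n := ZMod.card n
        have : hammingNorm (u - v)
            = (Finset.univ.filter fun i => (u - v) i ≠ 0).card := rfl
        have hcu : (Finset.univ : Finset (ZMod n)).card = n := by
          rw [Finset.card_univ, hcard]
        rw [hcard]
        omega
      have := Finset.card_le_card ((hfull ▸ suppSet_subset (u - v)) :
        Finset.univ ⊆ pairSet (u - v))
      rw [Finset.card_univ, ZMod.card] at this
      omega
  have existence : ∃ c ∈ Code, c ≠ (0 : ZMod n → F) ∧ pairDist c 0 = d + 1 := by
    set S : Finset (ZMod n) := (Finset.range d).image (Nat.cast : ℕ → ZMod n) with hSdef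
    have hScard : S.card = d := by
      rw [hSdef, Finset.card_image_of_injOn, Finset.card_range]
      intro a ha b hb hab
      simp only [Finset.coe_range, Set.mem_Iio] at ha hb
      have hv : (a : ZMod n).val = (b : ZMod n).val := by rw [hab]
      rwa [ZMod.val_cast_of_lt (ha.trans hdn), ZMod.val_cast_of_lt (hb.trans hdn)] at hv
    set L : (ZMod n → F) →ₗ[F] ((↥(Sᶜ)) → F) :=
      LinearMap.funLeft F F (fun i : ↥(Sᶜ) => (i : ZMod n)) with hLdef
    have hker : LinearMap.ker (L.comp Code.subtype) ≠ ⊥ := by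
      intro hk
      have hinj : Function.Injective (L.comp Code.subtype) := LinearMap.ker_eq_bot.mp hk
      have hle := LinearMap.finrank_le_finrank_of_injective hinj
      rw [hdim, Module.finrank_fintype_fun_eq_card, Fintype.card_coe,
        Finset.card_compl, hScard, ZMod.card] at hle
      omega
    obtain ⟨x, hxker, hx0⟩ := (Submodule.ne_bot_iff _).mp hker
    set c : ZMod n → F := (x : ZMod n → F) with hcdef
    have hc0 : c ≠ 0 := fun h => hx0 (Subtype.ext h)
    have hsupp : ∀ i : ZMod n, i ∉ S → c i = 0 := by
      intro i hi
      have hmem : i ∈ Sᶜ := Finset.mem_compl.mpr hi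
      have := congrFun (LinearMap.mem_ker.mp hxker) ⟨i, hmem⟩
      simpa [hLdef, LinearMap.funLeft_apply] using this
    refine ⟨c, x.2, hc0, ?_⟩
    have hub : pairDist c 0 ≤ d + 1 := by
      rw [pairDist_eq_card, sub_zero]
      set T : Finset (ZMod n) :=
        (Finset.range (d + 1)).image (fun j : ℕ => (j : ZMod n) - 1) with hTdef
      have hsubT : pairSet c ⊆ T := by
        intro i hi
        simp only [pairSet, Finset.mem_filter, Finset.mem_univ, true_and] at hi
        rcases hi with h1 | h2
        · have hiS : i ∈ S := by
            by_contra h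
            exact h1 (hsupp i h)
          obtain ⟨j, hj, hji⟩ := Finset.mem_image.mp hiS
          rw [Finset.mem_range] at hj
          refine Finset.mem_image.mpr ⟨j + 1, Finset.mem_range.mpr (by omega), ?_⟩
          push_cast
          rw [← hji]; ring
        · have hiS : i + 1 ∈ S := by
            by_contra h
            exact h2 (hsupp _ h)
          obtain ⟨j, hj, hji⟩ := Finset.mem_image.mp hiS
          rw [Finset.mem_range] at hj
          refine Finset.mem_image.mpr ⟨j, Finset.mem_range.mpr (by omega), ?_⟩
          rw [hji]; ring
      calc (pairSet c).card ≤ T.card := Finset.card_le_card hsubT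
        _ ≤ d + 1 := le_trans (Finset.card_image_le) (by rw [Finset.card_range])
    have hlb : d + 1 ≤ pairDist c 0 := part1 c x.2 0 Code.zero_mem hc0
    omega
  constructor
  · refine ⟨part1, ?_⟩
    obtain ⟨c, hcmem, hc0, hcd⟩ := existence
    exact ⟨c, hcmem, 0, Code.zero_mem, hc0, hcd⟩
  · have : Fintype Code := Fintype.ofFinite Code
    have he : n - (d + 1) + 2 = n - d + 1 := by omega
    rw [Nat.card_eq_fintype_card, Module.card_eq_pow_finrank (K := F) (V := Code), hdim, hq, he]
end

section
/- Let C = ⟨g(x)⟩ be an ω-constacyclic code over F_q of length n, dimension k, and minimum Hamming distance d with d ≤ n − k. Then: (i) every codeword c(x) ∈ C of Hamming weight d′ with 0 < d′ ≤ n − k satisfies I(c(x)) ≥ 2, hence w_P(c(x)) ≥ d′ + 2; and (ii) the minimum pair-distance d_p of C satisfies d_p ≥ d + 2. -/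
open Polynomial

section Aux
set_option linter.unusedSectionVars false

variable {n : ℕ} [NeZero n] {F : Type*} [Field F] [DecidableEq F]

lemma natCast_val_self (i : ZMod n) : ((i.val : ℕ) : ZMod n) = i := by
  simp [ZMod.natCast_val, ZMod.cast_id]

omit [NeZero n] in
lemma cast_pred_add_one {t : ℕ} (ht : 0 < t) : ((t - 1 : ℕ) : ZMod n) + 1 = (t : ZMod n) := by
  have h : (t - 1) + 1 = t := by omega
  calc ((t - 1 : ℕ) : ZMod n) + 1 = (((t - 1) + 1 : ℕ) : ZMod n) := by push_cast; ring
    _ = (t : ZMod n) := by rw [h]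

lemma exists_min_nat {P : ℕ → Prop} [DecidablePred P] (h : ∃ t, P t) :
    ∃ t, P t ∧ ∀ r < t, ¬ P r :=
  ⟨Nat.find h, Nat.find_spec h, fun r hr => Nat.find_min h hr⟩

lemma coeff_polyOf (c : ZMod n → F) (j : ℕ) :
    (polyOf c).coeff j = if j < n then c (j : ZMod n) else 0 := by
  unfold polyOf
  rw [Polynomial.finset_sum_coeff]
  simp only [Polynomial.coeff_C_mul, Polynomial.coeff_X_pow]
  split_ifs with h
  · rw [Finset.sum_eq_single ((j : ZMod n))]
    · rw [if_pos (ZMod.val_cast_of_lt h).symm, mul_one]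
    · intro b _ hb
      rw [if_neg, mul_zero]
      intro hj; exact hb (by rw [hj, natCast_val_self])
    · simp
  · apply Finset.sum_eq_zero
    intro i _
    rw [if_neg, mul_zero]
    intro hj; exact h (hj ▸ i.val_lt)

lemma polyOf_ne_zero {c : ZMod n → F} (hc : c ≠ 0) : polyOf c ≠ 0 := by
  intro h
  apply hc
  funext i
  have := coeff_polyOf c i.val
  rw [h, Polynomial.coeff_zero, if_pos i.val_lt, natCast_val_self] at this
  exact this.symm

lemma natDegree_polyOf_lt (c : ZMod n → F) : (polyOf c).natDegree < n := by
  have h1 : (polyOf c).natDegree ≤ n - 1 := by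
    rw [Polynomial.natDegree_le_iff_coeff_eq_zero]
    intro N hN
    rw [coeff_polyOf, if_neg]
    omega
  have := Nat.pos_of_ne_zero (NeZero.ne n)
  omega

lemma polyOf_sub (u v : ZMod n → F) : polyOf (u - v) = polyOf u - polyOf v := by
  unfold polyOf
  rw [← Finset.sum_sub_distrib]
  congr 1; funext i
  simp [sub_mul]

noncomputable def shiftc (ω : F) (c : ZMod n → F) : ZMod n → F :=
  fun i => if i = 0 then ω * c (-1) else c (i - 1)

lemma polyOf_shiftc (ω : F) (c : ZMod n → F) :
    polyOf (shiftc ω c) = X * polyOf c - C (c (-1)) * (X ^ n - C ω) := by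
  have hn := Nat.pos_of_ne_zero (NeZero.ne n)
  ext j
  rw [coeff_polyOf]
  match j with
  | 0 =>
    rw [Polynomial.coeff_sub, Polynomial.mul_coeff_zero, Polynomial.coeff_X_zero, zero_mul,
      Polynomial.coeff_C_mul, Polynomial.coeff_sub, Polynomial.coeff_X_pow,
      Polynomial.coeff_C]
    rw [if_pos hn, if_neg (by omega : ¬ (0 : ℕ) = n), if_pos rfl]
    rw [Nat.cast_zero]
    simp only [shiftc, if_pos rfl]
    simp [mul_comm]
  | (j+1) =>
    rw [Polynomial.coeff_sub, Polynomial.coeff_X_mul, coeff_polyOf,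
      Polynomial.coeff_C_mul, Polynomial.coeff_sub, Polynomial.coeff_X_pow,
      Polynomial.coeff_C]
    rw [if_neg (by omega : ¬ j + 1 = 0)]
    by_cases h1 : j + 1 < n
    · rw [if_pos h1, if_pos (by omega : j < n), if_neg (by omega : ¬ j + 1 = n)]
      have hne : ((j+1 : ℕ) : ZMod n) ≠ 0 := by
        intro h
        have h2 := ZMod.val_cast_of_lt h1
        rw [h, ZMod.val_zero] at h2
        omega
      simp only [shiftc, if_neg hne]
      push_cast
      ring_nf
    · rw [if_neg h1]
      by_cases h2 : j + 1 = n
      · rw [if_pos h2, if_pos (by omega : j < n)]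
        have hj : ((j : ℕ) : ZMod n) = -1 := by
          have h3 : ((j+1 : ℕ) : ZMod n) = 0 := by
            rw [h2]; exact ZMod.natCast_self n
          push_cast at h3 ⊢
          linear_combination h3
        rw [hj]
        ring
      · rw [if_neg h2, if_neg (by omega : ¬ j < n)]
        ring

lemma dvd_polyOf_shiftc {ω : F} {g : Polynomial F} (hgdvd : g ∣ X ^ n - C ω)
    {c : ZMod n → F} (hc : g ∣ polyOf c) : g ∣ polyOf (shiftc ω c) := by
  rw [polyOf_shiftc]
  exact dvd_sub (Dvd.dvd.mul_left hc X) (Dvd.dvd.mul_left hgdvd _)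

lemma dvd_polyOf_shiftc_iter {ω : F} {g : Polynomial F} (hgdvd : g ∣ X ^ n - C ω)
    {c : ZMod n → F} (hc : g ∣ polyOf c) (t : ℕ) : g ∣ polyOf ((shiftc ω)^[t] c) := by
  induction t with
  | zero => exact hc
  | succ t ih => rw [Function.iterate_succ_apply']; exact dvd_polyOf_shiftc hgdvd ih

lemma shiftc_iter_ne_iff {ω : F} (hω : ω ≠ 0) (c : ZMod n → F) (t : ℕ) (i : ZMod n) :
    (shiftc ω)^[t] c i ≠ 0 ↔ c (i - t) ≠ 0 := by
  induction t generalizing i with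
  | zero => simp
  | succ t ih =>
    rw [Function.iterate_succ_apply']
    have h1 : shiftc ω ((shiftc ω)^[t] c) i ≠ 0 ↔ (shiftc ω)^[t] c (i - 1) ≠ 0 := by
      unfold shiftc
      split_ifs with h
      · subst h; simp [hω, zero_sub]
      · rfl
    rw [h1, ih]
    congr! 2
    push_cast
    ring

/-- Key lemma: a nonzero codeword cannot be supported in an arc of length `m ≤ deg g`. -/
lemma no_small_arc {ω : F} (hω : ω ≠ 0) {g : Polynomial F} (hgdvd : g ∣ X ^ n - C ω)
    {c : ZMod n → F} (hc : g ∣ polyOf c) (hc0 : c ≠ 0)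
    (a : ZMod n) (m : ℕ) (hmn : m ≤ n) (hm : m ≤ g.natDegree)
    (hsupp : ∀ i, c i ≠ 0 → ∃ j < m, i = a + (j : ZMod n)) : False := by
  have hn := Nat.pos_of_ne_zero (NeZero.ne n)
  set t : ℕ := n - a.val with ht
  have hta : (t : ZMod n) = -a := by
    have : (t : ZMod n) = (n : ZMod n) - (a.val : ZMod n) := by
      rw [ht, Nat.cast_sub a.val_lt.le]
    rw [this, ZMod.natCast_self, natCast_val_self, zero_sub]
  set c' := (shiftc ω)^[t] c with hc'
  have hdvd' : g ∣ polyOf c' := dvd_polyOf_shiftc_iter hgdvd hc t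
  have hne : ∀ i : ZMod n, c' i ≠ 0 ↔ c (i - t) ≠ 0 := fun i => shiftc_iter_ne_iff hω c t i
  obtain ⟨i₀, hi₀⟩ : ∃ i, c i ≠ 0 := by
    by_contra h
    push_neg at h
    exact hc0 (funext fun i => h i)
  have hc'0 : c' ≠ 0 := by
    intro h
    have h2 : c' (i₀ + t) ≠ 0 := (hne _).mpr (by rw [add_sub_cancel_right]; exact hi₀)
    rw [h] at h2
    exact h2 rfl
  have hm0 : 0 < m := by
    rcases hsupp i₀ hi₀ with ⟨j, hj, _⟩
    omega
  have hsupp' : ∀ j : ℕ, m ≤ j → j < n → c' (j : ZMod n) = 0 := by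
    intro j hmj hjn
    by_contra h
    rcases hsupp _ ((hne _).mp h) with ⟨j', hj', hj'e⟩
    have : (j : ZMod n) = (j' : ZMod n) := by
      rw [sub_eq_iff_eq_add] at hj'e
      rw [hj'e, hta]
      ring
    have := congrArg ZMod.val this
    rw [ZMod.val_cast_of_lt hjn, ZMod.val_cast_of_lt (lt_of_lt_of_le hj' hmn)] at this
    omega
  have hdeg' : (polyOf c').natDegree ≤ m - 1 := by
    rw [Polynomial.natDegree_le_iff_coeff_eq_zero]
    intro N hN
    rw [coeff_polyOf]
    split_ifs with h
    · exact hsupp' N (by omega) h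
    · rfl
  have := Polynomial.natDegree_le_of_dvd hdvd' (polyOf_ne_zero hc'0)
  omega

/-- From a non-element one can walk to a boundary of type `(∉ S, ∈ S)`. -/
lemma boundary_nonempty {S : Finset (ZMod n)} (hS : S.Nonempty) (hSu : S ≠ Finset.univ) :
    (Finset.univ.filter fun i : ZMod n => i ∉ S ∧ i + 1 ∈ S).Nonempty := by
  classical
  obtain ⟨s, hs⟩ := hS
  obtain ⟨u, hu⟩ : ∃ u, u ∉ S := by
    by_contra h
    push_neg at h
    exact hSu (Finset.eq_univ_iff_forall.mpr h)
  obtain ⟨t₀, hspec, hmin⟩ := exists_min_nat (P := fun t : ℕ => (u + (t : ZMod n)) ∈ S)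
    ⟨(s - u).val, by show u + (((s - u).val : ℕ) : ZMod n) ∈ S; rw [natCast_val_self]; simpa⟩
  have ht₀pos : 0 < t₀ := by
    rcases Nat.eq_zero_or_pos t₀ with h | h
    · exfalso; rw [h] at hspec; simp at hspec; exact hu hspec
    · exact h
  refine ⟨u + ((t₀ - 1 : ℕ) : ZMod n), ?_⟩
  rw [Finset.mem_filter]
  refine ⟨Finset.mem_univ _, hmin _ (by omega), ?_⟩
  rw [add_assoc, cast_pred_add_one ht₀pos]
  exact hspec

lemma card_boundary_eq (S : Finset (ZMod n)) :
    (Finset.univ.filter fun i : ZMod n => i ∈ S ∧ i + 1 ∉ S).card =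
    (Finset.univ.filter fun i : ZMod n => i ∉ S ∧ i + 1 ∈ S).card := by
  classical
  set A := S.image (fun i => i - 1) with hA
  have hmemA : ∀ i : ZMod n, i ∈ A ↔ i + 1 ∈ S := by
    intro i
    rw [hA, Finset.mem_image]
    constructor
    · rintro ⟨x, hx, rfl⟩; simpa using hx
    · intro h; exact ⟨i + 1, h, by ring⟩
  have h1 : (Finset.univ.filter fun i : ZMod n => i ∈ S ∧ i + 1 ∉ S) = S \ A := by
    ext i; simp [Finset.mem_sdiff, hmemA]
  have h2 : (Finset.univ.filter fun i : ZMod n => i ∉ S ∧ i + 1 ∈ S) = A \ S := by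
    ext i; simp [Finset.mem_sdiff, hmemA, and_comm]
  rw [h1, h2]
  refine Finset.card_sdiff_comm ?_
  rw [hA, Finset.card_image_of_injective _ (sub_left_injective)]

/-- If `S` has at most one boundary and is neither empty nor everything, it is an arc of
length `≤ n`. -/
lemma arc_of_boundary_le_one {S : Finset (ZMod n)} (hS : S.Nonempty) (hSu : S ≠ Finset.univ)
    (hB : (Finset.univ.filter fun i : ZMod n => i ∉ S ∧ i + 1 ∈ S).card ≤ 1) :
    ∃ (a : ZMod n) (m : ℕ), 0 < m ∧ m ≤ n ∧
      S = (Finset.range m).image fun j : ℕ => a + (j : ZMod n) := by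
  classical
  have hn := Nat.pos_of_ne_zero (NeZero.ne n)
  obtain ⟨b, hb⟩ := boundary_nonempty hS hSu
  rw [Finset.mem_filter] at hb
  obtain ⟨-, hbS, hb1S⟩ := hb
  have hB' : ∀ x ∈ (Finset.univ.filter fun i : ZMod n => i ∈ S ∧ i + 1 ∉ S),
      ∀ y ∈ (Finset.univ.filter fun i : ZMod n => i ∈ S ∧ i + 1 ∉ S), x = y := by
    apply Finset.card_le_one.mp
    rw [card_boundary_eq]; exact hB
  have hwitQ : (b + 1 + ((n - 1 : ℕ) : ZMod n)) ∉ S := by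
    have : b + 1 + ((n - 1 : ℕ) : ZMod n) = b := by
      rw [Nat.cast_sub hn, ZMod.natCast_self, Nat.cast_one]
      ring
    rw [this]; exact hbS
  obtain ⟨m, hmspec, hmmin⟩ := exists_min_nat (P := fun t : ℕ => (b + 1 + (t : ZMod n)) ∉ S)
    ⟨n - 1, hwitQ⟩
  have hmpos : 0 < m := by
    rcases Nat.eq_zero_or_pos m with h | h
    · exfalso; rw [h] at hmspec; simp at hmspec; exact hmspec hb1S
    · exact h
  have hmle : m ≤ n - 1 := by
    by_contra h
    exact (hmmin (n-1) (by omega)) hwitQ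
  refine ⟨b + 1, m, hmpos, by omega, ?_⟩
  ext s
  rw [Finset.mem_image]
  constructor
  · intro hsS
    have hwitR : (s + (((b - s).val : ℕ) : ZMod n)) ∉ S := by
      rw [natCast_val_self]; simpa
    obtain ⟨t₁, ht₁spec, ht₁min⟩ := exists_min_nat (P := fun t : ℕ => (s + (t : ZMod n)) ∉ S)
      ⟨(b - s).val, hwitR⟩
    have ht₁pos : 0 < t₁ := by
      rcases Nat.eq_zero_or_pos t₁ with h | h
      · exfalso; rw [h] at ht₁spec; simp at ht₁spec; exact ht₁spec hsS
      · exact h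
    have ht₁v : t₁ ≤ (b - s).val := by
      by_contra h
      exact (ht₁min _ (by omega)) hwitR
    have hvpos : 0 < (b - s).val := by
      rcases Nat.eq_zero_or_pos (b - s).val with h | h
      · exfalso
        have h2 : b - s = 0 := by
          have h3 := natCast_val_self (b - s)
          rw [h] at h3; simpa using h3.symm
        rw [sub_eq_zero] at h2
        exact hbS (h2 ▸ hsS)
      · exact h
    have hvlt : (b - s).val < n := (b - s).val_lt
    have hx1 : s + ((t₁ - 1 : ℕ) : ZMod n) ∈ S := by
      by_contra h
      exact (ht₁min (t₁ - 1) (by omega)) h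
    have hx1' : (s + ((t₁ - 1 : ℕ) : ZMod n)) + 1 ∉ S := by
      rw [add_assoc, cast_pred_add_one ht₁pos]
      exact ht₁spec
    have hx2 : b + 1 + ((m - 1 : ℕ) : ZMod n) ∈ S := by
      by_contra h
      exact (hmmin (m - 1) (by omega)) h
    have hx2' : (b + 1 + ((m - 1 : ℕ) : ZMod n)) + 1 ∉ S := by
      rw [add_assoc, cast_pred_add_one hmpos]
      exact hmspec
    have heq : s + ((t₁ - 1 : ℕ) : ZMod n) = b + 1 + ((m - 1 : ℕ) : ZMod n) :=
      hB' _ (Finset.mem_filter.mpr ⟨Finset.mem_univ _, hx1, hx1'⟩)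
        _ (Finset.mem_filter.mpr ⟨Finset.mem_univ _, hx2, hx2'⟩)
    have hs_eq : s = b + ((n - (b - s).val : ℕ) : ZMod n) := by
      rw [Nat.cast_sub hvlt.le, ZMod.natCast_self]
      rw [natCast_val_self]
      ring
    have hcast : (((n - (b - s).val) + (t₁ - 1) : ℕ) : ZMod n)
        = ((1 + (m - 1) : ℕ) : ZMod n) := by
      rw [hs_eq] at heq
      push_cast at heq ⊢
      linear_combination heq
    have hnat : (n - (b - s).val) + (t₁ - 1) = 1 + (m - 1) := by
      have h1 : (n - (b - s).val) + (t₁ - 1) < n := by omega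
      have h2 : 1 + (m - 1) < n := by omega
      have h3 := congrArg ZMod.val hcast
      rwa [ZMod.val_cast_of_lt h1, ZMod.val_cast_of_lt h2] at h3
    refine ⟨n - (b - s).val - 1, Finset.mem_range.mpr (by omega), ?_⟩
    have h4 : ((n - (b - s).val : ℕ) : ZMod n) = 1 + ((n - (b - s).val - 1 : ℕ) : ZMod n) := by
      rw [add_comm, cast_pred_add_one (t := n - (b - s).val) (by omega)]
    have h5 : b + ((n - (b - s).val : ℕ) : ZMod n)
        = b + 1 + ((n - (b - s).val - 1 : ℕ) : ZMod n) := by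
      rw [h4]; ring
    rw [← hs_eq] at h5
    exact h5.symm
  · rintro ⟨j, hj, rfl⟩
    rw [Finset.mem_range] at hj
    by_contra h
    exact (hmmin j hj) h

lemma pairDist_eq_pairDist_sub_zero (u v : ZMod n → F) :
    pairDist u v = pairDist (u - v) 0 := by
  unfold pairDist
  congr 1
  apply Finset.filter_congr
  intro i _
  simp [Prod.ext_iff, sub_eq_zero]

lemma pairDist_zero_eq_s7 (c : ZMod n → F) :
    pairDist c 0 = (Finset.univ.filter fun i : ZMod n => c i ≠ 0).card +
      (Finset.univ.filter fun i : ZMod n =>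
        i ∉ (Finset.univ.filter fun i : ZMod n => c i ≠ 0) ∧
        i + 1 ∈ (Finset.univ.filter fun i : ZMod n => c i ≠ 0)).card := by
  classical
  set S := Finset.univ.filter fun i : ZMod n => c i ≠ 0 with hS
  have h1 : (Finset.univ.filter fun i : ZMod n => (c i, c (i + 1)) ≠ (0, 0))
      = S ∪ (Finset.univ.filter fun i : ZMod n => i ∉ S ∧ i + 1 ∈ S) := by
    ext i
    simp only [Finset.mem_filter, Finset.mem_union, Finset.mem_univ, true_and, hS,
      ne_eq, Prod.mk.injEq, not_and_or]
    tauto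
  have h2 : Disjoint S (Finset.univ.filter fun i : ZMod n => i ∉ S ∧ i + 1 ∈ S) := by
    rw [Finset.disjoint_left]
    intro a ha h
    rw [Finset.mem_filter] at h
    exact h.2.1 ha
  unfold pairDist
  simp only [Pi.zero_apply]
  rw [h1, Finset.card_union_of_disjoint h2]

lemma two_le_cycL_of_not_arc {S : Finset (ZMod n)} (hS : S.Nonempty) (harc : ¬ IsArc S) :
    2 ≤ cycL S := by
  classical
  have hmem : cycL S ∈ {m | ∃ P : Finset (Finset (ZMod n)), P.card = m ∧ (∀ T ∈ P, IsArc T) ∧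
      (↑P : Set (Finset (ZMod n))).PairwiseDisjoint id ∧ P.sup id = S} := by
    apply Nat.sInf_mem
    refine ⟨S.card, S.image (fun i => {i}), ?_, ?_, ?_, ?_⟩
    · exact Finset.card_image_of_injective _ Finset.singleton_injective
    · intro T hT
      rw [Finset.mem_image] at hT
      obtain ⟨i, _, rfl⟩ := hT
      refine ⟨i, 1, one_pos, ?_⟩
      ext x
      simp
    · intro x hx y hy hxy
      simp only [Finset.coe_image, Set.mem_image] at hx hy
      obtain ⟨i, _, rfl⟩ := hx
      obtain ⟨j, _, rfl⟩ := hy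
      simp only [Function.onFun, id]
      rw [Finset.disjoint_singleton]
      intro h; exact hxy (by rw [h])
    · ext x
      rw [Finset.mem_sup]
      simp
  obtain ⟨P, hcard, harcs, _, hsup⟩ := hmem
  by_contra h
  push_neg at h
  interval_cases hL : cycL S
  · rw [Finset.card_eq_zero] at hcard
    subst hcard
    simp at hsup
    obtain ⟨s, hs⟩ := hS
    rw [← hsup] at hs
    simp at hs
  · rw [Finset.card_eq_one] at hcard
    obtain ⟨T, rfl⟩ := hcard
    rw [Finset.sup_singleton] at hsup
    exact harc (hsup ▸ harcs T (Finset.mem_singleton_self T))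

/-- A nonzero codeword of a code with `deg g = n-1` has the same support as `g`. -/
lemma supp_eq_coeff_g {g : Polynomial F} (hg0 : g ≠ 0) (hdg : g.natDegree = n - 1)
    {c : ZMod n → F} (hc : g ∣ polyOf c) (hc0 : c ≠ 0) (i : ZMod n) :
    c i ≠ 0 ↔ g.coeff i.val ≠ 0 := by
  have hn := Nat.pos_of_ne_zero (NeZero.ne n)
  obtain ⟨q, hq⟩ := hc
  have hq0 : q ≠ 0 := by
    rintro rfl
    rw [mul_zero] at hq
    exact polyOf_ne_zero hc0 hq
  have hdq : q.natDegree = 0 := by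
    have h1 := natDegree_polyOf_lt c
    rw [hq, Polynomial.natDegree_mul hg0 hq0, hdg] at h1
    omega
  have hqC : q = Polynomial.C (q.coeff 0) := Polynomial.eq_C_of_natDegree_eq_zero hdq
  have hα : q.coeff 0 ≠ 0 := by
    intro h
    rw [h, map_zero] at hqC
    exact hq0 hqC
  have hci : c i = g.coeff i.val * q.coeff 0 := by
    have := coeff_polyOf c i.val
    rw [if_pos i.val_lt, natCast_val_self] at this
    rw [← this, hq, hqC]
    rw [Polynomial.coeff_mul_C, Polynomial.coeff_C_zero]
  rw [hci]
  simp [hα]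

lemma supp_univ_case {ω : F} (hω : ω ≠ 0) {g : Polynomial F} (hgdvd : g ∣ X ^ n - C ω)
    {c : ZMod n → F} (hc : g ∣ polyOf c) (hc0 : c ≠ 0) (hdgn : n ≤ g.natDegree) : False :=
  no_small_arc hω hgdvd hc hc0 0 n le_rfl hdgn
    (fun i _ => ⟨i.val, i.val_lt, by rw [zero_add, natCast_val_self]⟩)

lemma card_arc {a : ZMod n} {m : ℕ} (hmn : m ≤ n) :
    ((Finset.range m).image fun j : ℕ => a + (j : ZMod n)).card = m := by
  rw [Finset.card_image_of_injOn, Finset.card_range]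
  intro x hx y hy hxy
  rw [Finset.mem_coe, Finset.mem_range] at hx hy
  have : (x : ZMod n) = (y : ZMod n) := by
    have := hxy
    simpa using this
  have := congrArg ZMod.val this
  rwa [ZMod.val_cast_of_lt (by omega), ZMod.val_cast_of_lt (by omega)] at this

/-- The support of a nonzero codeword of weight `≤ deg g` is not an arc. -/
lemma not_isArc_supp {ω : F} (hω : ω ≠ 0) {g : Polynomial F} (hgdvd : g ∣ X ^ n - C ω)
    {c : ZMod n → F} (hc : g ∣ polyOf c) (hc0 : c ≠ 0)
    (hwt : (Finset.univ.filter fun i : ZMod n => c i ≠ 0).card ≤ g.natDegree) :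
    ¬ IsArc (Finset.univ.filter fun i : ZMod n => c i ≠ 0) := by
  rintro ⟨a, m, hm0, hSeq⟩
  by_cases hmn : m ≤ n
  · have hcard := card_arc (a := a) hmn
    rw [← hSeq] at hcard
    refine no_small_arc hω hgdvd hc hc0 a m hmn (hcard ▸ hwt) ?_
    intro i hi
    have : i ∈ (Finset.univ.filter fun i : ZMod n => c i ≠ 0) :=
      Finset.mem_filter.mpr ⟨Finset.mem_univ _, hi⟩
    rw [hSeq, Finset.mem_image] at this
    obtain ⟨j, hj, hji⟩ := this
    exact ⟨j, Finset.mem_range.mp hj, hji.symm⟩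
  · have hSu : (Finset.univ.filter fun i : ZMod n => c i ≠ 0) = Finset.univ := by
      apply Finset.eq_univ_iff_forall.mpr
      intro i
      rw [hSeq, Finset.mem_image]
      exact ⟨(i - a).val, Finset.mem_range.mpr (by have := (i - a).val_lt; omega),
        by rw [natCast_val_self]; ring⟩
    have hcard : (Finset.univ.filter fun i : ZMod n => c i ≠ 0).card = n := by
      rw [hSu, Finset.card_univ, ZMod.card]
    exact supp_univ_case hω hgdvd hc hc0 (hcard ▸ hwt)

/-- A nonzero codeword of weight `≤ deg g` has at least two boundaries. -/
lemma two_le_boundary {ω : F} (hω : ω ≠ 0) {g : Polynomial F} (hgdvd : g ∣ X ^ n - C ω)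
    {c : ZMod n → F} (hc : g ∣ polyOf c) (hc0 : c ≠ 0)
    (hwt : (Finset.univ.filter fun i : ZMod n => c i ≠ 0).card ≤ g.natDegree) :
    2 ≤ (Finset.univ.filter fun i : ZMod n =>
      i ∉ (Finset.univ.filter fun i : ZMod n => c i ≠ 0) ∧
      i + 1 ∈ (Finset.univ.filter fun i : ZMod n => c i ≠ 0)).card := by
  by_contra h
  push_neg at h
  by_cases hSu : (Finset.univ.filter fun i : ZMod n => c i ≠ 0) = Finset.univ
  · have hcard : (Finset.univ.filter fun i : ZMod n => c i ≠ 0).card = n := by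
      rw [hSu, Finset.card_univ, ZMod.card]
    exact supp_univ_case hω hgdvd hc hc0 (hcard ▸ hwt)
  · have hS : (Finset.univ.filter fun i : ZMod n => c i ≠ 0).Nonempty := by
      obtain ⟨i, hi⟩ : ∃ i, c i ≠ 0 := by
        by_contra hh
        push_neg at hh
        exact hc0 (funext fun i => hh i)
      exact ⟨i, Finset.mem_filter.mpr ⟨Finset.mem_univ _, hi⟩⟩
    obtain ⟨a, m, hm0, hmn, hSeq⟩ := arc_of_boundary_le_one hS hSu (by omega)
    exact not_isArc_supp hω hgdvd hc hc0 hwt ⟨a, m, hm0, hSeq⟩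

end Aux

/-- for an `ω`-constacyclic code `C = ⟨g⟩` of length `n`, dimension `k`
(i.e. `deg g = n − k`) and minimum Hamming distance `d ≤ n − k`:
(i) every codeword of Hamming weight `d′` with `0 < d′ ≤ n − k` satisfies `I(c) ≥ 2`,
hence `w_P(c) ≥ d′ + 2`; (ii) the minimum pair-distance of `C` is at least `d + 2`. -/
theorem stmt7 {n k d : ℕ} [NeZero n] {F : Type*} [Field F] [DecidableEq F]
    {ω : F} (hω : ω ≠ 0) {g : Polynomial F} (hmonic : g.Monic)
    (hgdvd : g ∣ X ^ n - C ω) (hkn : k ≤ n) (hdeg : g.natDegree = n - k)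
    (hd : (∀ c : ZMod n → F, g ∣ polyOf c → c ≠ 0 → d ≤ hammingNorm c) ∧
      ∃ c : ZMod n → F, g ∣ polyOf c ∧ c ≠ 0 ∧ hammingNorm c = d)
    (hdnk : d ≤ n - k) :
    (∀ c : ZMod n → F, g ∣ polyOf c → 0 < hammingNorm c → hammingNorm c ≤ n - k →
      2 ≤ cycL (Finset.univ.filter fun i : ZMod n => c i ≠ 0) ∧
      hammingNorm c + 2 ≤ pairDist c 0) ∧
    (∀ u v : ZMod n → F, g ∣ polyOf u → g ∣ polyOf v → u ≠ v → d + 2 ≤ pairDist u v) := by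
  classical
  have hn := Nat.pos_of_ne_zero (NeZero.ne n)
  have hg0 : g ≠ 0 := hmonic.ne_zero
  -- the two key facts, abbreviations
  have hNorm : ∀ c : ZMod n → F,
      hammingNorm c = (Finset.univ.filter fun i : ZMod n => c i ≠ 0).card := fun _ => rfl
  have part1 : ∀ c : ZMod n → F, g ∣ polyOf c → 0 < hammingNorm c → hammingNorm c ≤ n - k →
      2 ≤ cycL (Finset.univ.filter fun i : ZMod n => c i ≠ 0) ∧
      hammingNorm c + 2 ≤ pairDist c 0 := by
    intro c hc hpos hle
    have hc0 : c ≠ 0 := by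
      rintro rfl
      rw [hNorm] at hpos
      simp at hpos
    have hSne : (Finset.univ.filter fun i : ZMod n => c i ≠ 0).Nonempty := by
      rw [← Finset.card_pos, ← hNorm]
      exact hpos
    have hwt : (Finset.univ.filter fun i : ZMod n => c i ≠ 0).card ≤ g.natDegree := by
      rw [hdeg, ← hNorm]
      exact hle
    constructor
    · exact two_le_cycL_of_not_arc hSne (not_isArc_supp hω hgdvd hc hc0 hwt)
    · have h1 := pairDist_zero_eq_s7 c
      have h2 := two_le_boundary hω hgdvd hc hc0 hwt
      rw [hNorm]
      omega
  refine ⟨part1, ?_⟩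
  intro u v hu hv huv
  set c := u - v with hcdef
  have hc : g ∣ polyOf c := by
    rw [hcdef, polyOf_sub]
    exact dvd_sub hu hv
  have hc0 : c ≠ 0 := sub_ne_zero.mpr huv
  have hpd : pairDist u v = pairDist c 0 := pairDist_eq_pairDist_sub_zero u v
  have hpd2 := pairDist_zero_eq_s7 c
  have hd1 : d ≤ (Finset.univ.filter fun i : ZMod n => c i ≠ 0).card := by
    rw [← hNorm]
    exact hd.1 c hc hc0
  by_cases hSu : (Finset.univ.filter fun i : ZMod n => c i ≠ 0) = Finset.univ
  · -- full support: pairDist = n and d + 2 ≤ n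
    have hcard : (Finset.univ.filter fun i : ZMod n => c i ≠ 0).card = n := by
      rw [hSu, Finset.card_univ, ZMod.card]
    have hdn : d + 2 ≤ n := by
      by_cases hk2 : 2 ≤ k
      · omega
      · interval_cases k
        · -- k = 0 : no nonzero codeword
          exfalso
          have h1 := Polynomial.natDegree_le_of_dvd hc (polyOf_ne_zero hc0)
          have h2 := natDegree_polyOf_lt c
          omega
        · -- k = 1 : all nonzero codewords have the same support as g
          exfalso
          have hdg : g.natDegree = n - 1 := hdeg
          obtain ⟨c₀, hc₀, hc₀0, hc₀d⟩ := hd.2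
          have hfeq : (Finset.univ.filter fun i : ZMod n => c₀ i ≠ 0)
              = (Finset.univ.filter fun i : ZMod n => c i ≠ 0) := by
            apply Finset.filter_congr
            intro i _
            exact (supp_eq_coeff_g hg0 hdg hc₀ hc₀0 i).trans
              (supp_eq_coeff_g hg0 hdg hc hc0 i).symm
          have : d = n := by
            rw [← hc₀d, hNorm, hfeq, hcard]
          omega
    omega
  · have hSne : (Finset.univ.filter fun i : ZMod n => c i ≠ 0).Nonempty := by
      obtain ⟨i, hi⟩ : ∃ i, c i ≠ 0 := by
        by_contra hh
        push_neg at hh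
        exact hc0 (funext fun i => hh i)
      exact ⟨i, Finset.mem_filter.mpr ⟨Finset.mem_univ _, hi⟩⟩
    have hB1 : 1 ≤ (Finset.univ.filter fun i : ZMod n =>
        i ∉ (Finset.univ.filter fun i : ZMod n => c i ≠ 0) ∧
        i + 1 ∈ (Finset.univ.filter fun i : ZMod n => c i ≠ 0)).card :=
      Finset.card_pos.mpr (boundary_nonempty hSne hSu)
    by_cases hcase : (Finset.univ.filter fun i : ZMod n => c i ≠ 0).card ≤ n - k
    · have h2 := two_le_boundary hω hgdvd hc hc0 (by rw [hdeg]; exact hcase)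
      omega
    · omega
end

section
/- Let q be a prime power, δ ∈ F_{q²} \ F_q with monic minimal polynomial x² − bx − c over F_q, and let u, v, w, z ∈ F_q with z ≠ 0 and uz − vw ≠ 0 and w + zδ ≠ 0. For an integer i ≥ 2, define a₀ = Σ_{j=0}^{⌊(i−2)/2⌋} C(i−2−j, j) b^{i−2−2j} c^{j+1} and a₁ = Σ_{j=0}^{⌊(i−1)/2⌋} C(i−1−j, j) b^{i−1−2j} c^{j}. Then δ^i = (u + vδ)/(w + zδ) if and only if a₁ ≠ 0, b = −a₀/a₁ + v/(z·a₁) − w/z, and c = −(w·a₀)/(z·a₁) + u/(z·a₁). -/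
open Polynomial

/-!
Since `δ² = bδ + c`, induction gives `δ^i = a₀ + a₁δ`, where `a₁` and `a₀ / c` are consecutive
terms of the generalized Fibonacci sequence `G₀ = 1, G₁ = b, Gₙ₊₂ = bGₙ₊₁ + cGₙ`, whose closed
form is the binomial sum `Gₙ = ∑ⱼ C(n−j, j) b^{n−2j} cʲ`. Multiplying out
`δ^i (w + zδ) = u + vδ` and comparing coefficients in the basis `1, δ` gives two linear
equations over `F`, and these solve for `b` and `c` exactly as stated; `uz − vw ≠ 0` rules out
`a₁ = 0`.
-/

open Finset

section GenFib

variable {R : Type*} [CommSemiring R] (b c : R)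

noncomputable def genFibTerm (n j : ℕ) : R :=
  ((n - j).choose j : R) * b ^ (n - 2 * j) * c ^ j

noncomputable def genFib (n : ℕ) : R :=
  ∑ j ∈ range (n + 1), genFibTerm b c n j

lemma genFibTerm_eq_zero {n j : ℕ} (h : n < 2 * j) : genFibTerm b c n j = 0 := by
  simp [genFibTerm, Nat.choose_eq_zero_of_lt (show n - j < j by omega)]

lemma genFibTerm_zero_right (n : ℕ) : genFibTerm b c n 0 = b ^ n := by
  simp [genFibTerm]

lemma genFibTerm_add_two_succ (n j : ℕ) :
    genFibTerm b c (n + 2) (j + 1) =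
      b * genFibTerm b c (n + 1) (j + 1) + c * genFibTerm b c n j := by
  by_cases hj : 2 * j + 1 ≤ n
  · have hpascal :
        (n + 2 - (j + 1)).choose (j + 1) = (n - j).choose j + (n - j).choose (j + 1) := by
      rw [show n + 2 - (j + 1) = n - j + 1 by omega, Nat.choose_succ_succ']
    have hexp : n - 2 * j = n + 1 - 2 * (j + 1) + 1 := by omega
    simp only [genFibTerm, hpascal, show n + 2 - 2 * (j + 1) = n - 2 * j by omega,
      show n + 1 - (j + 1) = n - j by omega, hexp]
    push_cast
    ring
  rcases Nat.lt_or_ge n (2 * j) with hlt | hge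
  · simp [genFibTerm_eq_zero, hlt, show n + 2 < 2 * (j + 1) by omega,
      show n + 1 < 2 * (j + 1) by omega]
  · obtain rfl : n = 2 * j := by omega
    rw [genFibTerm_eq_zero b c (show 2 * j + 1 < 2 * (j + 1) by omega)]
    simp only [genFibTerm, show 2 * j + 2 - (j + 1) = j + 1 by omega,
      show 2 * j + 2 - 2 * (j + 1) = 0 by omega, show 2 * j - j = j by omega, Nat.sub_self,
      Nat.choose_self]
    ring

lemma genFib_eq_sum_range_of_lt {n m : ℕ} (hm : n / 2 < m) :
    genFib b c n = ∑ j ∈ range m, genFibTerm b c n j := by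
  rw [genFib]
  rcases le_total (n + 1) m with h | h
  · refine sum_subset (range_subset_range.2 h) fun j _ hj => genFibTerm_eq_zero b c ?_
    simp only [mem_range] at hj
    omega
  · refine (sum_subset (range_subset_range.2 h) fun j _ hj => genFibTerm_eq_zero b c ?_).symm
    simp only [mem_range] at hj
    omega

lemma genFib_zero : genFib b c 0 = 1 := by
  simp [genFib, genFibTerm]

lemma genFib_one : genFib b c 1 = b := by
  simp [genFib, genFibTerm, sum_range_succ]

lemma genFib_add_two (n : ℕ) :
    genFib b c (n + 2) = b * genFib b c (n + 1) + c * genFib b c n := by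
  rw [genFib_eq_sum_range_of_lt b c (m := n + 3) (by omega),
    genFib_eq_sum_range_of_lt b c (n := n + 1) (m := n + 3) (by omega),
    genFib_eq_sum_range_of_lt b c (m := n + 2) (by omega), sum_range_succ' _ (n + 2),
    sum_range_succ' _ (n + 2)]
  simp only [genFibTerm_add_two_succ, genFibTerm_zero_right, sum_add_distrib, ← mul_sum]
  ring

lemma map_genFib {S : Type*} [CommSemiring S] (f : R →+* S) (n : ℕ) :
    f (genFib b c n) = genFib (f b) (f c) n := by
  simp [genFib, genFibTerm, map_sum]

end GenFib

lemma pow_add_two_eq_of_sq_eq {R : Type*} [CommRing R] {b c x : R} (hx : x ^ 2 = b * x + c)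
    (n : ℕ) : x ^ (n + 2) = c * genFib b c n + genFib b c (n + 1) * x := by
  induction n using Nat.twoStepInduction with
  | zero => rw [genFib_zero, genFib_one, hx]; ring
  | one =>
    rw [genFib_add_two b c 0, genFib_zero, genFib_one]
    linear_combination (x + b) * hx
  | more n ih₁ ih₂ =>
    rw [genFib_add_two b c (n + 1)]
    linear_combination x * ih₂ + genFib b c (n + 2) * hx

lemma aCoeff0_eq_mul_genFib {F : Type*} [Field F] (b c : F) (i : ℕ) :
    aCoeff0 b c i = c * genFib b c (i - 2) := by
  rw [genFib_eq_sum_range_of_lt b c (Nat.lt_succ_self _), aCoeff0, mul_sum]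
  exact sum_congr rfl fun j _ => by rw [genFibTerm]; ring

lemma aCoeff1_eq_genFib {F : Type*} [Field F] (b c : F) (i : ℕ) :
    aCoeff1 b c i = genFib b c (i - 1) := by
  rw [genFib_eq_sum_range_of_lt b c (Nat.lt_succ_self _), aCoeff1]
  rfl

lemma pow_eq_aCoeff {F E : Type*} [Field F] [CommRing E] [Algebra F E] {b c : F} {x : E}
    (hx : x ^ 2 = algebraMap F E b * x + algebraMap F E c) {i : ℕ} (hi : 2 ≤ i) :
    x ^ i = algebraMap F E (aCoeff0 b c i) + algebraMap F E (aCoeff1 b c i) * x := by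
  obtain ⟨n, rfl⟩ := Nat.exists_eq_add_of_le' hi
  rw [pow_add_two_eq_of_sq_eq hx, aCoeff0_eq_mul_genFib, aCoeff1_eq_genFib, map_mul,
    map_genFib, map_genFib]
  rfl

lemma algebraMap_add_algebraMap_mul_inj {F E : Type*} [Field F] [CommRing E] [Nontrivial E]
    [Algebra F E] {x : E} (hx : x ∉ Set.range (algebraMap F E)) {r s r' s' : F} :
    algebraMap F E r + algebraMap F E s * x = algebraMap F E r' + algebraMap F E s' * x ↔
      r = r' ∧ s = s' := by
  refine ⟨fun h => ?_, fun ⟨hr, hs⟩ => hr ▸ hs ▸ rfl⟩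
  obtain rfl : s = s' := by
    by_contra hne
    have hs : s - s' ≠ 0 := sub_ne_zero.2 hne
    refine hx ⟨(r' - r) / (s - s'), (hs.isUnit.map (algebraMap F E)).mul_left_cancel ?_⟩
    rw [← map_mul, mul_div_cancel₀ _ hs, map_sub, map_sub]
    linear_combination -h
  exact ⟨(algebraMap F E).injective (add_right_cancel h), rfl⟩

lemma coeff_equations_iff {F : Type*} [Field F] {a₀ a₁ b c u v w z : F} (hz : z ≠ 0)
    (hdet : u * z - v * w ≠ 0) :
    (a₀ * w + a₁ * z * c = u ∧ a₀ * z + a₁ * w + a₁ * z * b = v) ↔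
      a₁ ≠ 0 ∧ b = -a₀ / a₁ + v / (z * a₁) - w / z ∧ c = -(w * a₀) / (z * a₁) + u / (z * a₁) := by
  constructor
  · rintro ⟨hu, hv⟩
    have ha₁ : a₁ ≠ 0 := by
      rintro rfl
      exact hdet (by rw [← hu, ← hv]; ring)
    refine ⟨ha₁, ?_, ?_⟩
    · field_simp
      linear_combination hv
    · field_simp
      linear_combination hu
  · rintro ⟨ha₁, rfl, rfl⟩
    constructor <;> field_simp <;> ring

theorem stmt15_general {F E : Type*} [Field F] [Field E] [Algebra F E]
    {δ : E} (hδF : δ ∉ Set.range (algebraMap F E))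
    {b c : F} (hmin : minpoly F δ = X ^ 2 - Polynomial.C b * X - Polynomial.C c)
    (u v w z : F) (hz : z ≠ 0) (hdet : u * z - v * w ≠ 0)
    (hden : algebraMap F E w + algebraMap F E z * δ ≠ 0)
    (i : ℕ) (hi : 2 ≤ i) :
    δ ^ i = (algebraMap F E u + algebraMap F E v * δ) /
        (algebraMap F E w + algebraMap F E z * δ) ↔
      aCoeff1 b c i ≠ 0 ∧
        b = -aCoeff0 b c i / aCoeff1 b c i + v / (z * aCoeff1 b c i) - w / z ∧
        c = -(w * aCoeff0 b c i) / (z * aCoeff1 b c i) + u / (z * aCoeff1 b c i) := by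
  set φ := algebraMap F E
  have hδ2 : δ ^ 2 = φ b * δ + φ c := by
    have h := minpoly.aeval F δ
    rw [hmin] at h
    simp only [map_sub, map_pow, map_mul, aeval_X, aeval_C] at h
    linear_combination h
  set a₀ := aCoeff0 b c i
  set a₁ := aCoeff1 b c i
  have hprod : δ ^ i * (φ w + φ z * δ) =
      φ (a₀ * w + a₁ * z * c) + φ (a₀ * z + a₁ * w + a₁ * z * b) * δ := by
    rw [pow_eq_aCoeff hδ2 hi]
    simp only [map_add, map_mul]
    linear_combination φ a₁ * φ z * hδ2
  rw [eq_div_iff hden, hprod, algebraMap_add_algebraMap_mul_inj hδF, coeff_equations_iff hz hdet]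

/-- for `δ ∈ F_{q²} \ F_q` with minimal polynomial `x² − bx − c`, and
`u,v,w,z ∈ F_q` with `z ≠ 0`, `uz − vw ≠ 0`, `w + zδ ≠ 0`, and an integer `i ≥ 2`:
`δ^i = (u + vδ)/(w + zδ)` iff `a₁ ≠ 0`, `b = −a₀/a₁ + v/(z a₁) − w/z` and
`c = −(w a₀)/(z a₁) + u/(z a₁)`. -/
theorem stmt15 {q : ℕ} {F E : Type*} [Field F] [Fintype F] [Field E] [Fintype E] [Algebra F E]
    (hq : Fintype.card F = q) (hE : Fintype.card E = q ^ 2)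
    {δ : E} (hδF : δ ∉ Set.range (algebraMap F E))
    {b c : F} (hmin : minpoly F δ = X ^ 2 - Polynomial.C b * X - Polynomial.C c)
    (u v w z : F) (hz : z ≠ 0) (hdet : u * z - v * w ≠ 0)
    (hden : algebraMap F E w + algebraMap F E z * δ ≠ 0)
    (i : ℕ) (hi : 2 ≤ i) :
    δ ^ i = (algebraMap F E u + algebraMap F E v * δ) /
        (algebraMap F E w + algebraMap F E z * δ) ↔
      aCoeff1 b c i ≠ 0 ∧
        b = -aCoeff0 b c i / aCoeff1 b c i + v / (z * aCoeff1 b c i) - w / z ∧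
        c = -(w * aCoeff0 b c i) / (z * aCoeff1 b c i) + u / (z * aCoeff1 b c i) :=
  stmt15_general hδF hmin u v w z hz hdet hden i hi
end

section
/- Let F be a field, b, c ∈ F, and let δ be an element of an extension field of F satisfying δ² = bδ + c. For an integer i ≥ 2, define a₀(i) = Σ_{j=0}^{⌊(i−2)/2⌋} C(i−2−j, j) b^{i−2−2j} c^{j+1} and a₁(i) = Σ_{j=0}^{⌊(i−1)/2⌋} C(i−1−j, j) b^{i−1−2j} c^{j}. Then δ^i = a₁(i)·δ + a₀(i); equivalently, x^i ≡ a₁(i)·x + a₀(i) (mod x² − bx − c) in F[x]. -/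
open Polynomial

/-- Fibonacci-type polynomial sequence: `g k = ∑_j C(k-j,j) b^(k-2j) c^j`. -/
noncomputable def gSeq {R : Type*} [CommRing R] (b c : R) (k : ℕ) : R :=
  ∑ j ∈ Finset.range (k / 2 + 1), ((k - j).choose j : R) * b ^ (k - 2 * j) * c ^ j

theorem gSeq_zero {R : Type*} [CommRing R] (b c : R) : gSeq b c 0 = 1 := by
  simp [gSeq]

theorem gSeq_one {R : Type*} [CommRing R] (b c : R) : gSeq b c 1 = b := by
  simp [gSeq]

theorem gSeq_rec {R : Type*} [CommRing R] (b c : R) (k : ℕ) :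
    gSeq b c (k + 2) = b * gSeq b c (k + 1) + c * gSeq b c k := by
  have hN : (k + 2) / 2 = k / 2 + 1 := by omega
  unfold gSeq
  rw [hN]
  -- split off the j = 0 term of the LHS
  rw [Finset.sum_range_succ']
  have hL : ∀ j ∈ Finset.range (k / 2 + 1),
      ((k + 2 - (j + 1)).choose (j + 1) : R) * b ^ (k + 2 - 2 * (j + 1)) * c ^ (j + 1)
      = ((k - j).choose (j + 1) : R) * b ^ (k - 2 * j) * c ^ (j + 1)
        + ((k - j).choose j : R) * b ^ (k - 2 * j) * c ^ (j + 1) := by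
    intro j hj
    rw [Finset.mem_range] at hj
    have h1 : k + 2 - (j + 1) = (k - j) + 1 := by omega
    have h2 : k + 2 - 2 * (j + 1) = k - 2 * j := by omega
    rw [h1, h2, Nat.choose_succ_succ' (k - j) j]
    push_cast
    ring
  rw [Finset.sum_congr rfl hL, Finset.sum_add_distrib]
  have hc : c * ∑ j ∈ Finset.range (k / 2 + 1),
      ((k - j).choose j : R) * b ^ (k - 2 * j) * c ^ j
      = ∑ j ∈ Finset.range (k / 2 + 1),
      ((k - j).choose j : R) * b ^ (k - 2 * j) * c ^ (j + 1) := by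
    rw [Finset.mul_sum]; exact Finset.sum_congr rfl fun j _ => by ring
  have hb : b * ∑ j ∈ Finset.range ((k + 1) / 2 + 1),
      ((k + 1 - j).choose j : R) * b ^ (k + 1 - 2 * j) * c ^ j
      = ((k + 2 - 0).choose 0 : R) * b ^ (k + 2 - 2 * 0) * c ^ 0
        + ∑ j ∈ Finset.range (k / 2 + 1),
          ((k - j).choose (j + 1) : R) * b ^ (k - 2 * j) * c ^ (j + 1) := by
    rw [Finset.mul_sum]
    have hterm : ∀ j ∈ Finset.range ((k + 1) / 2 + 1),
        b * (((k + 1 - j).choose j : R) * b ^ (k + 1 - 2 * j) * c ^ j)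
        = ((k + 1 - j).choose j : R) * b ^ (k + 2 - 2 * j) * c ^ j := by
      intro j hj
      rw [Finset.mem_range] at hj
      have h2 : k + 2 - 2 * j = (k + 1 - 2 * j) + 1 := by omega
      rw [h2, pow_succ]
      ring
    rw [Finset.sum_congr rfl hterm]
    rcases Nat.even_or_odd k with ⟨m, hm⟩ | ⟨m, hm⟩
    · subst hm
      have e1 : (m + m + 1) / 2 + 1 = m + 1 := by omega
      have e2 : (m + m) / 2 + 1 = m + 1 := by omega
      rw [e1, e2, Finset.sum_range_succ', Finset.sum_range_succ]
      have hz : ((m + m - m).choose (m + 1) : R) = 0 := by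
        have : m + m - m = m := by omega
        rw [this, Nat.choose_eq_zero_of_lt (by omega)]
        simp
      rw [hz]
      have hcong : ∀ j ∈ Finset.range m,
          ((m + m + 1 - (j + 1)).choose (j + 1) : R) * b ^ (m + m + 2 - 2 * (j + 1)) * c ^ (j + 1)
          = ((m + m - j).choose (j + 1) : R) * b ^ (m + m - 2 * j) * c ^ (j + 1) := by
        intro j hj
        rw [Finset.mem_range] at hj
        have h1 : m + m + 1 - (j + 1) = m + m - j := by omega
        have h2 : m + m + 2 - 2 * (j + 1) = m + m - 2 * j := by omega
        rw [h1, h2]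
      rw [Finset.sum_congr rfl hcong]
      simp
      ring
    · subst hm
      have e1 : (2 * m + 1 + 1) / 2 + 1 = m + 2 := by omega
      have e2 : (2 * m + 1) / 2 + 1 = m + 1 := by omega
      rw [e1, e2, Finset.sum_range_succ']
      have hcong : ∀ j ∈ Finset.range (m + 1),
          ((2 * m + 1 + 1 - (j + 1)).choose (j + 1) : R) * b ^ (2 * m + 1 + 2 - 2 * (j + 1)) * c ^ (j + 1)
          = ((2 * m + 1 - j).choose (j + 1) : R) * b ^ (2 * m + 1 - 2 * j) * c ^ (j + 1) := by
        intro j hj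
        rw [Finset.mem_range] at hj
        have h1 : 2 * m + 1 + 1 - (j + 1) = 2 * m + 1 - j := by omega
        have h2 : 2 * m + 1 + 2 - 2 * (j + 1) = 2 * m + 1 - 2 * j := by omega
        rw [h1, h2]
      rw [Finset.sum_congr rfl hcong]
      simp
      ring
  rw [hb, hc]
  ring

theorem poly_dvd_gSeq {F : Type*} [Field F] (b c : F) (k : ℕ) :
    (X ^ 2 - Polynomial.C b * X - Polynomial.C c : Polynomial F) ∣
      (X ^ (k + 2) - (Polynomial.C (gSeq b c (k + 1)) * X + Polynomial.C (c * gSeq b c k))) := by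
  induction k with
  | zero =>
      refine ⟨1, ?_⟩
      rw [gSeq_zero, gSeq_one]
      simp
      ring
  | succ n ih =>
      obtain ⟨q, hq⟩ := ih
      refine ⟨X * q + Polynomial.C (gSeq b c (n + 1)), ?_⟩
      have hr : gSeq b c (n + 2) = b * gSeq b c (n + 1) + c * gSeq b c n := gSeq_rec b c n
      rw [hr]
      simp only [map_add, map_mul] at hq ⊢
      linear_combination (X : Polynomial F) * hq

theorem aCoeff1_eq {F : Type*} [Field F] (b c : F) (k : ℕ) :
    aCoeff1 b c (k + 2) = gSeq b c (k + 1) := by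
  unfold aCoeff1 gSeq
  have h : k + 2 - 1 = k + 1 := by omega
  rw [h]

theorem aCoeff0_eq {F : Type*} [Field F] (b c : F) (k : ℕ) :
    aCoeff0 b c (k + 2) = c * gSeq b c k := by
  unfold aCoeff0 gSeq
  have h : k + 2 - 2 = k := by omega
  rw [h, Finset.mul_sum]
  exact Finset.sum_congr rfl fun j _ => by ring

/-- if `δ` lies in an extension field of `F` with `δ² = bδ + c`, then for
every integer `i ≥ 2`, `δ^i = a₁(i)δ + a₀(i)`; equivalently,
`x^i ≡ a₁(i)x + a₀(i) (mod x² − bx − c)` in `F[x]`. -/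
theorem stmt18 {F E : Type*} [Field F] [Field E] [Algebra F E]
    (b c : F) (δ : E) (hδ : δ ^ 2 = algebraMap F E b * δ + algebraMap F E c)
    (i : ℕ) (hi : 2 ≤ i) :
    δ ^ i = algebraMap F E (aCoeff1 b c i) * δ + algebraMap F E (aCoeff0 b c i) ∧
    (X ^ 2 - Polynomial.C b * X - Polynomial.C c : Polynomial F) ∣
      (X ^ i - (Polynomial.C (aCoeff1 b c i) * X + Polynomial.C (aCoeff0 b c i))) := by
  obtain ⟨k, rfl⟩ : ∃ k, i = k + 2 := ⟨i - 2, by omega⟩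
  have hdvd : (X ^ 2 - Polynomial.C b * X - Polynomial.C c : Polynomial F) ∣
      (X ^ (k + 2) - (Polynomial.C (aCoeff1 b c (k + 2)) * X
        + Polynomial.C (aCoeff0 b c (k + 2)))) := by
    rw [aCoeff1_eq, aCoeff0_eq]
    exact poly_dvd_gSeq b c k
  refine ⟨?_, hdvd⟩
  obtain ⟨q, hq⟩ := hdvd
  have h0 : Polynomial.aeval δ
      (X ^ (k + 2) - (Polynomial.C (aCoeff1 b c (k + 2)) * X
        + Polynomial.C (aCoeff0 b c (k + 2))) : Polynomial F) = 0 := by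
    rw [hq]
    have hd : Polynomial.aeval δ (X ^ 2 - Polynomial.C b * X - Polynomial.C c : Polynomial F)
        = 0 := by
      simp [hδ]
    rw [map_mul, hd, zero_mul]
  simp only [map_sub, map_add, map_mul, map_pow, Polynomial.aeval_X, Polynomial.aeval_C,
    sub_eq_zero] at h0
  exact h0
end

section
/- Let q be a prime power and δ ∈ F_{q⁴}* an element whose order nr divides (q−1)(q²+1) but does not divide q²−1, where ω = δ^n ∈ F_q* has order r and gcd((q−1)/r, n) = 1. Then the ω-constacyclic code C = ⟨(x−δ)(x−δ^q)(x−δ^{q²})(x−δ^{q³})⟩ ⊆ F_q[x]/(x^n − ω) has no codeword of Hamming weight 3; that is, its minimum Hamming distance is at least 4. -/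
open Polynomial

/-- Key algebraic lemma: three distinct `(q²+1)`-th roots of unity cannot satisfy a common
nontrivial relation `α + β z + γ z^{q+1} = 0` in a field with a `q`-power Frobenius. -/
theorem stmt19_key3 {E : Type*} [Field E] {q : ℕ} (hq2 : 2 ≤ q)
    (frob : ∀ x y : E, (x + y) ^ q = x ^ q + y ^ q)
    {z₀ z₁ z₂ : E} (h0 : z₀ ^ (q ^ 2 + 1) = 1) (h1 : z₁ ^ (q ^ 2 + 1) = 1)
    (h2 : z₂ ^ (q ^ 2 + 1) = 1)
    (h01 : z₀ ≠ z₁) (h02 : z₀ ≠ z₂) (h12 : z₁ ≠ z₂)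
    {α β γ : E} (hv : ¬(α = 0 ∧ β = 0 ∧ γ = 0))
    (hP0 : α + β * z₀ + γ * z₀ ^ (q + 1) = 0)
    (hP1 : α + β * z₁ + γ * z₁ ^ (q + 1) = 0)
    (hP2 : α + β * z₂ + γ * z₂ ^ (q + 1) = 0) : False := by
  have hq0 : q ≠ 0 := by omega
  have hq20 : q ^ 2 ≠ 0 := pow_ne_zero 2 hq0
  have zne : ∀ z : E, z ^ (q ^ 2 + 1) = 1 → z ≠ 0 := by
    intro z hz h
    rw [h, zero_pow (Nat.succ_ne_zero _)] at hz
    exact zero_ne_one hz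
  have hneg : ∀ x : E, (-x) ^ q = -(x ^ q) := by
    intro x
    have h := frob x (-x)
    rw [add_neg_cancel, zero_pow hq0] at h
    exact eq_neg_of_add_eq_zero_left (by linear_combination -h)
  have hsub : ∀ x y : E, (x - y) ^ q = x ^ q - y ^ q := by
    intro x y
    rw [sub_eq_add_neg, frob, hneg, ← sub_eq_add_neg]
  have frob2 : ∀ x y : E, (x + y) ^ (q ^ 2) = x ^ (q ^ 2) + y ^ (q ^ 2) := by
    intro x y
    rw [pow_two]
    simp only [pow_mul]
    rw [frob x y, frob]
  have hQ : ∀ z : E, z ^ (q ^ 2 + 1) = 1 → α + β * z + γ * z ^ (q + 1) = 0 →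
      α ^ (q ^ 2) * z ^ (q + 1) + β ^ (q ^ 2) * z ^ q + γ ^ (q ^ 2) = 0 := by
    intro z hz hP
    have e1 : z ^ (q ^ 2) * z ^ (q + 1) = z ^ q := by
      rw [← pow_add, show q ^ 2 + (q + 1) = (q ^ 2 + 1) + q by ring, pow_add, hz, one_mul]
    have e2 : (z ^ (q + 1)) ^ (q ^ 2) * z ^ (q + 1) = 1 := by
      rw [← pow_succ, ← pow_mul,
        show (q + 1) * (q ^ 2 + 1) = (q ^ 2 + 1) * (q + 1) by ring, pow_mul, hz, one_pow]
    have h3 : (α + β * z + γ * z ^ (q + 1)) ^ (q ^ 2) = 0 := by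
      rw [hP]
      exact zero_pow hq20
    rw [frob2, frob2, mul_pow, mul_pow] at h3
    linear_combination z ^ (q + 1) * h3 - β ^ (q ^ 2) * e1 - γ ^ (q ^ 2) * e2
  have hR : ∀ z : E, z ^ (q ^ 2 + 1) = 1 → α + β * z + γ * z ^ (q + 1) = 0 →
      -(γ * β ^ (q ^ 2)) * z ^ q + α ^ (q ^ 2) * β * z
        + (α ^ (q ^ 2) * α - γ * γ ^ (q ^ 2)) = 0 := by
    intro z hz hP
    have hQ' := hQ z hz hP
    linear_combination α ^ (q ^ 2) * hP - γ * hQ'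
  by_cases hAB : γ * β ^ (q ^ 2) = 0 ∧ α ^ (q ^ 2) * β = 0
  · obtain ⟨hA, hB⟩ := hAB
    by_cases hβ : β = 0
    · by_cases hγ : γ = 0
      · apply hv
        refine ⟨?_, hβ, hγ⟩
        rw [hβ, hγ] at hP0
        simpa using hP0
      · have pair : ∀ z z' : E, z ^ (q ^ 2 + 1) = 1 → z' ^ (q ^ 2 + 1) = 1 →
            α + β * z + γ * z ^ (q + 1) = 0 → α + β * z' + γ * z' ^ (q + 1) = 0 →
            z ≠ z' → z' = -z := by
          intro z z' hz hz' hPz hPz' hne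
          have hzz : z ^ (q + 1) = z' ^ (q + 1) := by
            apply mul_left_cancel₀ hγ
            linear_combination hPz - hPz' - (z - z') * hβ
          have hq1 : z ^ (q - 1) = z' ^ (q - 1) := by
            have c1 : (z ^ (q + 1)) ^ q = (z' ^ (q + 1)) ^ q := by rw [hzz]
            rw [← pow_mul, ← pow_mul,
              show (q + 1) * q = (q ^ 2 + 1) + (q - 1) by
                rcases Nat.exists_eq_add_of_le hq2 with ⟨t, rfl⟩
                rw [show 2 + t - 1 = t + 1 by omega]; ring,
              pow_add z (q ^ 2 + 1) (q - 1), pow_add z' (q ^ 2 + 1) (q - 1), hz, hz', one_mul, one_mul] at c1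
            exact c1
          have hsq : z ^ 2 = z' ^ 2 := by
            have hmul : z ^ (q - 1) * z ^ 2 = z' ^ (q - 1) * z' ^ 2 := by
              rw [← pow_add, ← pow_add, show q - 1 + 2 = q + 1 by omega]
              exact hzz
            rw [hq1] at hmul
            exact mul_left_cancel₀ (pow_ne_zero _ (zne z' hz')) hmul
          have hfac : (z - z') * (z + z') = 0 := by linear_combination hsq
          rcases mul_eq_zero.mp hfac with h | h
          · exact absurd (sub_eq_zero.mp h) hne
          · exact eq_neg_of_add_eq_zero_left (by linear_combination h)
        have e1 := pair z₀ z₁ h0 h1 hP0 hP1 h01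
        have e2 := pair z₀ z₂ h0 h2 hP0 hP2 h02
        exact h12 (e1.trans e2.symm)
    · have hγ : γ = 0 := by
        by_contra hγ
        exact (mul_ne_zero hγ (pow_ne_zero _ hβ)) hA
      have hα : α = 0 := by
        have h' : α ^ (q ^ 2) = 0 := (mul_eq_zero.mp hB).resolve_right hβ
        exact (pow_eq_zero_iff hq20).mp h'
      rw [hα, hγ] at hP0
      simp only [zero_mul, zero_add, add_zero] at hP0
      rcases mul_eq_zero.mp hP0 with h | h
      · exact hβ h
      · exact (zne z₀ h0) h
  · have hR0 := hR z₀ h0 hP0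
    have hR1 := hR z₁ h1 hP1
    have hR2 := hR z₂ h2 hP2
    have hw01ne : z₀ - z₁ ≠ 0 := sub_ne_zero.mpr h01
    have hw02ne : z₀ - z₂ ≠ 0 := sub_ne_zero.mpr h02
    have hw1 : -(γ * β ^ (q ^ 2)) * (z₀ - z₁) ^ q + α ^ (q ^ 2) * β * (z₀ - z₁) = 0 := by
      rw [hsub]
      linear_combination hR0 - hR1
    have hw2 : -(γ * β ^ (q ^ 2)) * (z₀ - z₂) ^ q + α ^ (q ^ 2) * β * (z₀ - z₂) = 0 := by
      rw [hsub]
      linear_combination hR0 - hR2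
    have hAne : γ * β ^ (q ^ 2) ≠ 0 := by
      intro hA0
      have hBne : α ^ (q ^ 2) * β ≠ 0 := fun hB0 => hAB ⟨hA0, hB0⟩
      have h' : α ^ (q ^ 2) * β * (z₀ - z₁) = 0 := by
        linear_combination hw1 + (z₀ - z₁) ^ q * hA0
      exact hw01ne ((mul_eq_zero.mp h').resolve_left hBne)
    have cross : (z₀ - z₁) ^ q * (z₀ - z₂) = (z₀ - z₂) ^ q * (z₀ - z₁) := by
      apply mul_left_cancel₀ (neg_ne_zero.mpr hAne)
      linear_combination (z₀ - z₂) * hw1 - (z₀ - z₁) * hw2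
    have crossq : ((z₀ - z₁) ^ q) ^ q * (z₀ - z₂) ^ q
        = ((z₀ - z₂) ^ q) ^ q * (z₀ - z₁) ^ q := by
      have h' := congrArg (· ^ q) cross
      simpa [mul_pow] using h'
    have hz0c : ∀ z : E, z ^ (q ^ 2 + 1) = 1 → (z ^ q) ^ q * z = 1 := by
      intro z hz
      rw [← pow_mul, ← pow_succ, show q * q + 1 = q ^ 2 + 1 by rw [pow_two]]
      exact hz
    have hww : ((z₀ - z₁) ^ q) ^ q * (z₀ * z₁) = z₁ - z₀ := by
      rw [hsub, hsub]
      linear_combination z₁ * hz0c z₀ h0 - z₀ * hz0c z₁ h1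
    have hww' : ((z₀ - z₂) ^ q) ^ q * (z₀ * z₂) = z₂ - z₀ := by
      rw [hsub, hsub]
      linear_combination z₂ * hz0c z₀ h0 - z₀ * hz0c z₂ h2
    have e1 : (z₁ - z₀) * ((z₀ - z₂) ^ q * (z₀ * z₂))
        = (z₂ - z₀) * ((z₀ - z₁) ^ q * (z₀ * z₁)) := by
      calc (z₁ - z₀) * ((z₀ - z₂) ^ q * (z₀ * z₂))
          = (((z₀ - z₁) ^ q) ^ q * (z₀ * z₁)) * ((z₀ - z₂) ^ q * (z₀ * z₂)) := by rw [hww]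
        _ = (((z₀ - z₂) ^ q) ^ q * (z₀ * z₂)) * ((z₀ - z₁) ^ q * (z₀ * z₁)) := by
            linear_combination ((z₀ * z₁) * (z₀ * z₂)) * crossq
        _ = (z₂ - z₀) * ((z₀ - z₁) ^ q * (z₀ * z₁)) := by rw [hww']
    have hz0ne : z₀ ≠ 0 := zne z₀ h0
    have e2 : (z₀ - z₁) * ((z₀ - z₂) ^ q * z₂) = (z₀ - z₂) * ((z₀ - z₁) ^ q * z₁) := by
      apply mul_left_cancel₀ hz0ne
      linear_combination -e1
    have e3 : ((z₀ - z₁) * (z₀ - z₂) ^ q) * z₂ = ((z₀ - z₁) * (z₀ - z₂) ^ q) * z₁ := by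
      linear_combination e2 + z₁ * cross
    exact h12 (mul_left_cancel₀ (mul_ne_zero hw01ne (pow_ne_zero _ hw02ne)) e3).symm

/-- let `δ ∈ F_{q⁴}*` have order `nr` dividing `(q−1)(q²+1)` but not
dividing `q²−1`, where `ω = δ^n ∈ F_q*` has order `r` and `gcd((q−1)/r, n) = 1`. Then the
`ω`-constacyclic code `⟨(x−δ)(x−δ^q)(x−δ^{q²})(x−δ^{q³})⟩ ⊆ F_q[x]/(x^n−ω)` has no codeword
of Hamming weight `3`; that is, its minimum Hamming distance is at least `4`. -/
theorem stmt19 {q n r : ℕ} [NeZero n] {F E : Type*} [Field F] [Fintype F] [DecidableEq F]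
    [Field E] [Fintype E] [Algebra F E]
    (hq : Fintype.card F = q) (hE : Fintype.card E = q ^ 4)
    (hn : 0 < n) (hr : 0 < r)
    {δ : E} (hδ : orderOf δ = n * r)
    (h1 : n * r ∣ (q - 1) * (q ^ 2 + 1)) (h2 : ¬ n * r ∣ q ^ 2 - 1)
    {ω : F} (hω : orderOf ω = r) (hωδ : algebraMap F E ω = δ ^ n)
    (h4 : Nat.gcd ((q - 1) / r) n = 1)
    (Code : Set (ZMod n → F))
    (hCode : Code = {c : ZMod n → F |
      ((X - C δ) * (X - C (δ ^ q)) * (X - C (δ ^ q ^ 2)) * (X - C (δ ^ q ^ 3))) ∣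
        (polyOf c).map (algebraMap F E)}) :
    (∀ c ∈ Code, hammingNorm c ≠ 3) ∧ (∀ c ∈ Code, c ≠ 0 → 4 ≤ hammingNorm c) := by
  subst hCode
  have h2q : 2 ≤ q := hq ▸ Fintype.one_lt_card
  have hδ0 : δ ≠ 0 := by
    intro h
    have h' := pow_orderOf_eq_one δ
    rw [hδ, h, zero_pow (Nat.mul_ne_zero hn.ne' hr.ne')] at h'
    exact zero_ne_one h'
  have hδpow1 : δ ^ ((q - 1) * (q ^ 2 + 1)) = 1 := orderOf_dvd_iff_pow_eq_one.mp (hδ ▸ h1)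
  have hω0 : ω ≠ 0 := by
    intro h
    rw [h, map_zero] at hωδ
    exact (pow_ne_zero n hδ0) hωδ.symm
  have hrq : r ∣ q - 1 := by
    have h' := FiniteField.pow_card_sub_one_eq_one ω hω0
    rw [hq] at h'
    exact hω ▸ orderOf_dvd_of_pow_eq_one h'
  obtain ⟨s, hs⟩ := hrq
  have hcop : Nat.Coprime n s := by
    have h' : (q - 1) / r = s := by rw [hs]; exact Nat.mul_div_cancel_left s hr
    rw [h'] at h4
    exact Nat.Coprime.symm h4
  have keydvd : ∀ m : ℕ, n * r ∣ (q - 1) * m → n ∣ m := by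
    intro m hm
    rw [hs] at hm
    have hm' : r * n ∣ r * (s * m) := by rwa [Nat.mul_comm r n, ← Nat.mul_assoc]
    have h' : n ∣ s * m := (mul_dvd_mul_iff_left (by omega : (r : ℕ) ≠ 0)).mp hm'
    exact hcop.dvd_of_dvd_mul_left h'
  -- injectivity of e ↦ δ ^ (e * (q-1)) on [0, n)
  have zinj : ∀ a b : ℕ, a < n → b < n →
      δ ^ (a * (q - 1)) = δ ^ (b * (q - 1)) → a = b := by
    have half : ∀ a b : ℕ, b ≤ a → a < n →
        δ ^ (a * (q - 1)) = δ ^ (b * (q - 1)) → a = b := by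
      intro a b hba han hab
      have h1' : δ ^ ((a - b) * (q - 1)) * δ ^ (b * (q - 1)) = 1 * δ ^ (b * (q - 1)) := by
        rw [← pow_add, one_mul, ← hab, ← Nat.add_mul, Nat.sub_add_cancel hba]
      have h2' : δ ^ ((a - b) * (q - 1)) = 1 := mul_right_cancel₀ (pow_ne_zero _ hδ0) h1'
      have h3' : n * r ∣ (a - b) * (q - 1) := hδ ▸ orderOf_dvd_of_pow_eq_one h2'
      rw [Nat.mul_comm (a - b) (q - 1)] at h3'
      have h4' : n ∣ a - b := keydvd _ h3'
      have h5' : a - b = 0 := Nat.eq_zero_of_dvd_of_lt h4' (by omega)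
      omega
    intro a b ha hb hab
    rcases le_total b a with h | h
    · exact half a b h ha hab
    · exact (half b a h hb hab.symm).symm
  -- Frobenius
  obtain ⟨m, hpprime, hcard⟩ := FiniteField.card F (ringChar F)
  haveI : Fact (ringChar F).Prime := ⟨hpprime⟩
  haveI : CharP E (ringChar F) :=
    charP_of_injective_algebraMap (algebraMap F E).injective (ringChar F)
  have hqpm : q = ringChar F ^ (m : ℕ) := by rw [← hq, hcard]
  have frob : ∀ x y : E, (x + y) ^ q = x ^ q + y ^ q := by
    intro x y
    rw [hqpm]
    exact add_pow_char_pow x y _ _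
  -- evaluation of the mapped polynomial
  have hevalsum : ∀ (c : ZMod n → F) (x : E),
      ((polyOf c).map (algebraMap F E)).eval x
        = ∑ i : ZMod n, algebraMap F E (c i) * x ^ i.val := by
    intro c x
    simp [polyOf, Polynomial.eval_map, Polynomial.eval₂_finset_sum]
  have main : ∀ c : ZMod n → F,
      (((X - C δ) * (X - C (δ ^ q)) * (X - C (δ ^ q ^ 2)) * (X - C (δ ^ q ^ 3))) ∣
        (polyOf c).map (algebraMap F E)) →
      ¬(hammingNorm c = 1 ∨ hammingNorm c = 2 ∨ hammingNorm c = 3) := by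
    intro c hdvd hcase
    classical
    set S := Finset.univ.filter (fun i : ZMod n => c i ≠ 0) with hS_def
    have hmem : ∀ i ∈ S, c i ≠ 0 := fun i hi => (Finset.mem_filter.mp hi).2
    have hcbne : ∀ i ∈ S, algebraMap F E (c i) ≠ 0 := by
      intro i hi h
      exact hmem i hi ((algebraMap F E).injective (h.trans (map_zero _).symm))
    have hcard : hammingNorm c = S.card := rfl
    have hEv : ∀ x : E,
        ((X - C x) ∣ ((X - C δ) * (X - C (δ ^ q)) * (X - C (δ ^ q ^ 2)) * (X - C (δ ^ q ^ 3)))) →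
        ∑ i ∈ S, algebraMap F E (c i) * x ^ i.val = 0 := by
      intro x hfac
      obtain ⟨k, hk⟩ := hfac.trans hdvd
      have hex : ((polyOf c).map (algebraMap F E)).eval x = 0 := by
        rw [hk]; simp
      rw [hevalsum] at hex
      rw [← hex]
      apply Finset.sum_subset (Finset.subset_univ S)
      intro i _ hi
      have h' : c i = 0 := by
        by_contra h
        exact hi (Finset.mem_filter.mpr ⟨Finset.mem_univ i, h⟩)
      rw [h', map_zero, zero_mul]
    have hEδ := hEv δ ⟨(X - C (δ ^ q)) * (X - C (δ ^ q ^ 2)) * (X - C (δ ^ q ^ 3)), by ring⟩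
    have hEδq := hEv (δ ^ q) ⟨(X - C δ) * (X - C (δ ^ q ^ 2)) * (X - C (δ ^ q ^ 3)), by ring⟩
    have hEδq2 := hEv (δ ^ q ^ 2) ⟨(X - C δ) * (X - C (δ ^ q)) * (X - C (δ ^ q ^ 3)), by ring⟩
    have hp : ∀ e : ℕ, (δ ^ e) ^ (q - 1) * δ ^ e = (δ ^ e) ^ q := by
      intro e
      rw [← pow_succ, show q - 1 + 1 = q by omega]
    have hexp2 : (q - 1) * (q + 1) + 1 = q ^ 2 := by
      rcases Nat.exists_eq_add_of_le h2q with ⟨t, rfl⟩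
      rw [show 2 + t - 1 = t + 1 by omega]; ring
    have hp2 : ∀ e : ℕ, ((δ ^ e) ^ (q - 1)) ^ (q + 1) * δ ^ e = (δ ^ e) ^ q ^ 2 := by
      intro e
      rw [← pow_mul, ← pow_succ, hexp2]
    rcases hcase with h | h | h
    · -- weight 1
      rw [hcard] at h
      obtain ⟨i₀, hSeq⟩ := Finset.card_eq_one.mp h
      have hi₀S : i₀ ∈ S := hSeq ▸ Finset.mem_singleton_self i₀
      rw [hSeq, Finset.sum_singleton] at hEδ
      exact (mul_ne_zero (hcbne i₀ hi₀S) (pow_ne_zero _ hδ0)) hEδ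
    · -- weight 2
      rw [hcard] at h
      obtain ⟨i₀, i₁, hne, hSeq⟩ := Finset.card_eq_two.mp h
      have hi₀S : i₀ ∈ S := hSeq ▸ by simp
      have hi₁S : i₁ ∈ S := hSeq ▸ by simp
      rw [hSeq, Finset.sum_pair hne] at hEδ hEδq
      rw [pow_right_comm δ q i₀.val, pow_right_comm δ q i₁.val] at hEδq
      have key : algebraMap F E (c i₁) * (δ ^ i₁.val * (δ ^ i₀.val) ^ (q - 1))
          = algebraMap F E (c i₁) * (δ ^ i₁.val * (δ ^ i₁.val) ^ (q - 1)) := by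
        linear_combination (δ ^ i₀.val) ^ (q - 1) * hEδ - hEδq
          - algebraMap F E (c i₀) * hp i₀.val - algebraMap F E (c i₁) * hp i₁.val
      have k1 := mul_left_cancel₀ (hcbne i₁ hi₁S) key
      have k2 : (δ ^ i₀.val) ^ (q - 1) = (δ ^ i₁.val) ^ (q - 1) :=
        mul_left_cancel₀ (pow_ne_zero i₁.val hδ0) k1
      rw [← pow_mul, ← pow_mul] at k2
      exact hne (ZMod.val_injective n
        (zinj i₀.val i₁.val (ZMod.val_lt i₀) (ZMod.val_lt i₁) k2))
    · -- weight 3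
      rw [hcard] at h
      obtain ⟨i₀, i₁, i₂, h01, h02, h12, hSeq⟩ := Finset.card_eq_three.mp h
      have hi₀S : i₀ ∈ S := hSeq ▸ by simp
      have hi₁S : i₁ ∈ S := hSeq ▸ by simp
      have hi₂S : i₂ ∈ S := hSeq ▸ by simp
      have hsum3 : ∀ f : ZMod n → E,
          ∑ i ∈ ({i₀, i₁, i₂} : Finset (ZMod n)), f i = f i₀ + f i₁ + f i₂ := by
        intro f
        rw [Finset.sum_insert (by simp [h01, h02]), Finset.sum_insert (by simp [h12]),
          Finset.sum_singleton]
        ring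
      rw [hSeq, hsum3] at hEδ hEδq hEδq2
      rw [pow_right_comm δ q i₀.val, pow_right_comm δ q i₁.val,
        pow_right_comm δ q i₂.val] at hEδq
      rw [pow_right_comm δ (q ^ 2) i₀.val, pow_right_comm δ (q ^ 2) i₁.val,
        pow_right_comm δ (q ^ 2) i₂.val] at hEδq2
      -- set up the matrix
      set ev : Fin 3 → ℕ := ![i₀.val, i₁.val, i₂.val] with hev
      set cb : Fin 3 → E :=
        ![algebraMap F E (c i₀), algebraMap F E (c i₁), algebraMap F E (c i₂)] with hcb
      set zv : Fin 3 → E := fun k => (δ ^ ev k) ^ (q - 1) with hzv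
      set M : Matrix (Fin 3) (Fin 3) E :=
        Matrix.of fun j k => zv k ^ (![0, 1, q + 1] j) with hM
      set dv : Fin 3 → E := fun k => cb k * δ ^ ev k with hdv
      have hMd : M.mulVec dv = 0 := by
        have r0 : M.mulVec dv 0 = 0 := by
          simp only [Matrix.mulVec, dotProduct, Fin.sum_univ_three, hM, Matrix.of_apply,
            hzv, hdv, hcb, hev, Matrix.cons_val_zero, Matrix.cons_val_one, Matrix.head_cons,
            Matrix.cons_val_two, Matrix.tail_cons, pow_zero, pow_one, one_mul]
          linear_combination hEδ
        have r1 : M.mulVec dv 1 = 0 := by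
          simp only [Matrix.mulVec, dotProduct, Fin.sum_univ_three, hM, Matrix.of_apply,
            hzv, hdv, hcb, hev, Matrix.cons_val_zero, Matrix.cons_val_one, Matrix.head_cons,
            Matrix.cons_val_two, Matrix.tail_cons, pow_zero, pow_one, one_mul]
          linear_combination hEδq + algebraMap F E (c i₀) * hp i₀.val
            + algebraMap F E (c i₁) * hp i₁.val + algebraMap F E (c i₂) * hp i₂.val
        have r2 : M.mulVec dv 2 = 0 := by
          simp only [Matrix.mulVec, dotProduct, Fin.sum_univ_three, hM, Matrix.of_apply,
            hzv, hdv, hcb, hev, Matrix.cons_val_zero, Matrix.cons_val_one, Matrix.head_cons,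
            Matrix.cons_val_two, Matrix.tail_cons, pow_zero, pow_one, one_mul]
          linear_combination hEδq2 + algebraMap F E (c i₀) * hp2 i₀.val
            + algebraMap F E (c i₁) * hp2 i₁.val + algebraMap F E (c i₂) * hp2 i₂.val
        funext j
        fin_cases j
        · exact r0
        · exact r1
        · exact r2
      have hdvne : dv ≠ 0 := by
        intro h'
        have h0' := congr_fun h' 0
        simp only [hdv, hcb, hev, Pi.zero_apply, Matrix.cons_val_zero] at h0'
        exact (mul_ne_zero (hcbne i₀ hi₀S) (pow_ne_zero _ hδ0)) h0'
      have hdet : M.det = 0 := Matrix.exists_mulVec_eq_zero_iff.mp ⟨dv, hdvne, hMd⟩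
      obtain ⟨v, hvne, hvM⟩ := Matrix.exists_vecMul_eq_zero_iff.mpr hdet
      have hP : ∀ k : Fin 3, v 0 + v 1 * zv k + v 2 * zv k ^ (q + 1) = 0 := by
        intro k
        have h' := congr_fun hvM k
        simp only [Matrix.vecMul, dotProduct, Fin.sum_univ_three, hM, Matrix.of_apply,
          Matrix.cons_val_zero, Matrix.cons_val_one, Matrix.head_cons, Matrix.cons_val_two,
          Matrix.tail_cons, Pi.zero_apply, pow_zero, pow_one, mul_one] at h'
        linear_combination h'
      have hz1 : ∀ k : Fin 3, zv k ^ (q ^ 2 + 1) = 1 := by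
        intro k
        show ((δ ^ ev k) ^ (q - 1)) ^ (q ^ 2 + 1) = 1
        rw [← pow_mul, ← pow_mul,
          show ev k * ((q - 1) * (q ^ 2 + 1)) = (q - 1) * (q ^ 2 + 1) * ev k by ring,
          pow_mul, hδpow1, one_pow]
      have hzinj : ∀ j k : Fin 3, zv j = zv k → ev j = ev k := by
        intro j k h'
        have hlt : ∀ l : Fin 3, ev l < n := by
          intro l; fin_cases l <;> simp [hev] <;> exact ZMod.val_lt _
        have h'' : δ ^ (ev j * (q - 1)) = δ ^ (ev k * (q - 1)) := by
          rw [pow_mul, pow_mul]; exact h'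
        exact zinj (ev j) (ev k) (hlt j) (hlt k) h''
      have hzd01 : zv 0 ≠ zv 1 := by
        intro h'
        apply h01
        have := hzinj 0 1 h'
        simp only [hev, Matrix.cons_val_zero, Matrix.cons_val_one, Matrix.head_cons] at this
        exact ZMod.val_injective n this
      have hzd02 : zv 0 ≠ zv 2 := by
        intro h'
        apply h02
        have := hzinj 0 2 h'
        simp only [hev, Matrix.cons_val_zero, Matrix.cons_val_two, Matrix.tail_cons,
          Matrix.head_cons] at this
        exact ZMod.val_injective n this
      have hzd12 : zv 1 ≠ zv 2 := by
        intro h'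
        apply h12
        have := hzinj 1 2 h'
        simp only [hev, Matrix.cons_val_one, Matrix.cons_val_two, Matrix.tail_cons,
          Matrix.head_cons] at this
        exact ZMod.val_injective n this
      have hvcond : ¬(v 0 = 0 ∧ v 1 = 0 ∧ v 2 = 0) := by
        rintro ⟨ha, hb, hc⟩
        apply hvne
        funext j
        fin_cases j <;> simpa
      exact stmt19_key3 h2q frob (hz1 0) (hz1 1) (hz1 2) hzd01 hzd02 hzd12 hvcond
        (hP 0) (hP 1) (hP 2)
  constructor
  · intro c hc h3
    exact main c hc (Or.inr (Or.inr h3))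
  · intro c hc hc0
    have h0 : hammingNorm c ≠ 0 := fun h => hc0 (hammingNorm_eq_zero.mp h)
    have h' := main c hc
    omega
end
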